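/- arXiv:math/0309233 — 10 statements merged into one kernel-verified Lean document; each statement's English description precedes it below -/
import Mathlib

section
/- Let n ≥ 3 and let p(z) = z^n − z, whose zeros are z_1 = 0 and z_j = e^{2πi(j−2)/(n−1)} for 2 ≤ j ≤ n, and whose critical points are w_i = (1/n)^{1/(n−1)} e^{2πi(i−1)/(n−1)} for 1 ≤ i ≤ n−1. Define the (n−1)×n complex matrix B = (β_{ij}) by β_{i1} = −(n+1)/(n·w_i) and, for 2 ≤ j ≤ n, β_{ij} = a_j(w_i) − conj(z_j² · a_j(w_i)), where a_j(w_i) = w_i/(n·(w_i − z_j)²). Then every column sum of B vanishes: Σ_{i=1}^{n−1} β_{ij} = 0 for all 1 ≤ j ≤ n. In particular B is positively singular, i.e., p is inextensible with respect to its zero 0. -/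
open Complex Polynomial

/-- The critical points `w_i = (1/n)^{1/(n-1)} e^{2πi(i-1)/(n-1)}`, `1 ≤ i ≤ n-1`,
of `p(z) = z^n - z`, indexed by `Fin (n-1)`. -/
noncomputable def wpt (n : ℕ) (i : Fin (n - 1)) : ℂ :=
  ((((1 : ℝ) / n) ^ ((1 : ℝ) / ((n : ℝ) - 1)) : ℝ) : ℂ) *
    Complex.exp (2 * Real.pi * Complex.I * ((i : ℕ) : ℂ) / ((n : ℂ) - 1))

/-- The zeros `z_1 = 0`, `z_j = e^{2πi(j-2)/(n-1)}`, `2 ≤ j ≤ n`,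
of `p(z) = z^n - z`, indexed by `Fin n`. -/
noncomputable def zpt (n : ℕ) (j : Fin n) : ℂ :=
  if (j : ℕ) = 0 then 0
  else Complex.exp (2 * Real.pi * Complex.I * (((j : ℕ) : ℂ) - 1) / ((n : ℂ) - 1))

/-- The coefficient `a_j(w_i) = w_i / (n (w_i - z_j)²)` for `2 ≤ j ≤ n`. -/
noncomputable def acoef (n : ℕ) (i : Fin (n - 1)) (j : Fin n) : ℂ :=
  wpt n i / ((n : ℂ) * (wpt n i - zpt n j) ^ 2)

/-- The `(n-1) × n` matrix `B = (β_{ij})` with `β_{i1} = -(n+1)/(n w_i)` and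
`β_{ij} = a_j(w_i) - conj(z_j² a_j(w_i))` for `2 ≤ j ≤ n`. -/
noncomputable def Bmat (n : ℕ) : Matrix (Fin (n - 1)) (Fin n) ℂ :=
  Matrix.of fun i j =>
    if (j : ℕ) = 0 then -((n : ℂ) + 1) / ((n : ℂ) * wpt n i)
    else acoef n i j - (starRingEnd ℂ) ((zpt n j) ^ 2 * acoef n i j)

/-- A complex `m × k` matrix is positively singular if there exist nonnegative reals
`μ_1, …, μ_m`, not all zero, with `∑ i μ_i m_{ij} = 0` for every column `j`. -/
def PositivelySingular {m k : ℕ} (M : Matrix (Fin m) (Fin k) ℂ) : Prop :=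
  ∃ μ : Fin m → ℝ, (∀ i, 0 ≤ μ i) ∧ (∃ i, μ i ≠ 0) ∧
    ∀ j, ∑ i, (μ i : ℂ) * M i j = 0

/-!
Write `m = n - 1`, `ω = e^{2πi/m}` and `r = (1/n)^{1/m}`. Indexing from `0`, the critical points are
`w_i = r ω^i` and the nonzero zeros are `z_j = ω^{j-1}`. The first column of `B` is a multiple of
`∑ ω^{-i} = 0`. For a column `j ≥ 1` put `ζ = z_j`. The homogeneity `a(w, z) = z⁻¹ a(w/z, 1)` of
`a(w, z) = w / (n (w - z)²)`, together with `conj ω^k = ω^{-k}`, gives `a_j(w_i) = ζ⁻¹ a(r ω^i/ζ, 1)`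
and `conj (ζ² a_j(w_i)) = ζ⁻¹ a(r ζ/ω^i, 1)`. As `i` runs over `ℤ/m`, both `ω^i/ζ` and `ζ/ω^i` run
over all `m`-th roots of unity, so the two parts of the column sum cancel.
-/

open scoped ComplexConjugate

section RootsOfUnity

variable {K : Type*} [GroupWithZero K] {ω : K} {m : ℕ} [NeZero m]

theorem pow_val_finSub (hω : ω ^ m = 1) (a b : Fin m) :
    ω ^ ((a - b : Fin m) : ℕ) = ω ^ (a : ℕ) / ω ^ (b : ℕ) := by
  have hω0 : ω ≠ 0 := by
    rintro rfl
    simp [NeZero.ne m] at hω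
  rw [Fin.val_sub, ← pow_eq_pow_mod _ hω, pow_add, pow_sub₀ _ hω0 b.is_lt.le, hω, one_mul,
    div_eq_mul_inv, ((Commute.refl ω).pow_pow _ _).inv_left₀.eq]

theorem sum_pow_div_pow_right {β : Type*} [AddCommMonoid β] (hω : ω ^ m = 1) (f : K → β)
    (t : Fin m) : ∑ i : Fin m, f (ω ^ (i : ℕ) / ω ^ (t : ℕ)) = ∑ i : Fin m, f (ω ^ (i : ℕ)) := by
  simp_rw [← pow_val_finSub hω]
  exact Fintype.sum_equiv (Equiv.subRight t) _ _ fun _ => rfl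

theorem sum_pow_div_pow_left {β : Type*} [AddCommMonoid β] (hω : ω ^ m = 1) (f : K → β)
    (t : Fin m) : ∑ i : Fin m, f (ω ^ (t : ℕ) / ω ^ (i : ℕ)) = ∑ i : Fin m, f (ω ^ (i : ℕ)) := by
  simp_rw [← pow_val_finSub hω]
  exact Fintype.sum_equiv (Equiv.subLeft t) _ _ fun _ => rfl

end RootsOfUnity

theorem div_mul_sub_sq_eq_inv_mul {K : Type*} [Field K] (c w : K) {z : K} (hz : z ≠ 0) :
    w / (c * (w - z) ^ 2) = z⁻¹ * (w / z / (c * (w / z - 1) ^ 2)) := by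
  rw [show w / z - 1 = (w - z) / z by field_simp, div_pow, mul_div_assoc' c, div_div_eq_mul_div,
    ← mul_div_assoc]
  congr 1
  field_simp

theorem conj_sq_mul_div_mul_sub_sq {c : ℂ} (hc : conj c = c) (w : ℂ) {z : ℂ} (hz : ‖z‖ = 1) :
    conj (z ^ 2 * (w / (c * (w - z) ^ 2))) =
      z⁻¹ * (conj w * z / (c * (conj w * z - 1) ^ 2)) := by
  have hz0 : z ≠ 0 := norm_ne_zero_iff.mp (hz ▸ one_ne_zero)
  simp only [map_mul, map_pow, map_div₀, map_sub, hc, ← Complex.inv_eq_conj hz]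
  rw [div_mul_sub_sq_eq_inv_mul _ _ (inv_ne_zero hz0), div_inv_eq_mul, inv_inv]
  field_simp

noncomputable def primRoot (n : ℕ) : ℂ :=
  Complex.exp (2 * Real.pi * Complex.I / ((n : ℂ) - 1))

noncomputable def critRadius (n : ℕ) : ℝ :=
  ((1 : ℝ) / n) ^ ((1 : ℝ) / ((n : ℝ) - 1))

theorem isPrimitiveRoot_primRoot {n : ℕ} (hn : 2 ≤ n) : IsPrimitiveRoot (primRoot n) (n - 1) := by
  have h := Complex.isPrimitiveRoot_exp (n - 1) (by omega)
  rwa [Nat.cast_pred (by omega)] at h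

theorem wpt_eq (n : ℕ) (i : Fin (n - 1)) : wpt n i = critRadius n * primRoot n ^ (i : ℕ) := by
  rw [wpt, critRadius, primRoot, ← Complex.exp_nat_mul]
  congr 2
  ring

theorem zpt_eq {n : ℕ} (j : Fin n) (hj : (j : ℕ) ≠ 0) :
    zpt n j = primRoot n ^ ((j : ℕ) - 1) := by
  rw [zpt, if_neg hj, primRoot, ← Complex.exp_nat_mul, Nat.cast_pred (by omega)]
  congr 1
  ring

theorem sum_Bmat_of_eq_zero {n : ℕ} (hn : 3 ≤ n) (j : Fin n) (hj : (j : ℕ) = 0) :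
    ∑ i : Fin (n - 1), Bmat n i j = 0 := by
  have hω := isPrimitiveRoot_primRoot (n := n) (by omega)
  have hB : ∀ i : Fin (n - 1), Bmat n i j =
      -((n : ℂ) + 1) / ((n : ℂ) * critRadius n) * (primRoot n)⁻¹ ^ (i : ℕ) := by
    intro i
    rw [Bmat, Matrix.of_apply, if_pos hj, wpt_eq, inv_pow]
    ring
  simp_rw [hB, ← Finset.mul_sum]
  rw [Fin.sum_univ_eq_sum_range (fun i => (primRoot n)⁻¹ ^ i),
    hω.inv.geom_sum_eq_zero (by omega), mul_zero]

theorem sum_Bmat_of_ne_zero {n : ℕ} (hn : 2 ≤ n) (j : Fin n) (hj : (j : ℕ) ≠ 0) :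
    ∑ i : Fin (n - 1), Bmat n i j = 0 := by
  have : NeZero (n - 1) := ⟨by omega⟩
  have hω := isPrimitiveRoot_primRoot hn
  have hnorm : ∀ k : ℕ, ‖primRoot n ^ k‖ = 1 := fun k => by
    rw [norm_pow, hω.norm'_eq_one (by omega), one_pow]
  set ω := primRoot n
  set r := critRadius n
  let t : Fin (n - 1) := ⟨(j : ℕ) - 1, by omega⟩
  set ζ := ω ^ (t : ℕ)
  have hw : ∀ i : Fin (n - 1), wpt n i = r * ω ^ (i : ℕ) := wpt_eq n
  have hz : zpt n j = ζ := zpt_eq j hj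
  have hζ0 : ζ ≠ 0 := pow_ne_zero _ (hω.ne_zero (by omega))
  let f : ℂ → ℂ := fun u => r * u / (n * (r * u - 1) ^ 2)
  have ha : ∀ i : Fin (n - 1), acoef n i j = ζ⁻¹ * f (ω ^ (i : ℕ) / ζ) := by
    intro i
    rw [acoef, hw, hz, div_mul_sub_sq_eq_inv_mul _ _ hζ0, mul_div_assoc]
  have hconj : ∀ i : Fin (n - 1), conj (ζ ^ 2 * acoef n i j) = ζ⁻¹ * f (ζ / ω ^ (i : ℕ)) := by
    intro i
    rw [acoef, hw, hz, conj_sq_mul_div_mul_sub_sq (Complex.conj_natCast n) _ (hnorm t), map_mul,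
      Complex.conj_ofReal, ← Complex.inv_eq_conj (hnorm _), mul_assoc, inv_mul_eq_div (ω ^ (i : ℕ))]
  have hB : ∀ i : Fin (n - 1), Bmat n i j = acoef n i j - conj (ζ ^ 2 * acoef n i j) :=
    fun i => by rw [Bmat, Matrix.of_apply, if_neg hj, hz]
  simp_rw [hB, Finset.sum_sub_distrib, hconj, ha, ← Finset.mul_sum]
  rw [sum_pow_div_pow_right hω.pow_eq_one f t, sum_pow_div_pow_left hω.pow_eq_one f t, sub_self]

theorem PositivelySingular.of_sum_col_eq_zero {m k : ℕ} [NeZero m]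
    {M : Matrix (Fin m) (Fin k) ℂ} (h : ∀ j, ∑ i, M i j = 0) : PositivelySingular M :=
  ⟨fun _ => 1, fun _ => zero_le_one, ⟨0, one_ne_zero⟩, fun j => by simpa using h j⟩

/-- Every column sum of `B(z^n - z)` vanishes; in particular `B` is positively singular,
i.e. `z^n - z` is inextensible with respect to its zero `0`. -/
theorem column_sums_vanish_and_positively_singular (n : ℕ) (hn : 3 ≤ n) :
    (∀ j : Fin n, ∑ i : Fin (n - 1), Bmat n i j = 0) ∧ PositivelySingular (Bmat n) := by
  have hsum : ∀ j : Fin n, ∑ i : Fin (n - 1), Bmat n i j = 0 := fun j =>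
    if hj : (j : ℕ) = 0 then sum_Bmat_of_eq_zero hn j hj else sum_Bmat_of_ne_zero (by omega) j hj
  have : NeZero (n - 1) := ⟨by omega⟩
  exact ⟨hsum, .of_sum_col_eq_zero hsum⟩
end

section
/- Let p be a monic complex polynomial of degree n ≥ 2 whose zeros z_1,…,z_n are all simple and whose derivative p' has only simple zeros w_1,…,w_{n−1}. Define the (n−1)×(n−1) complex matrix C = (γ_{ij}) by γ_{ij} = (w_i − z_j)^{−2} for 1 ≤ i ≤ n−1 and 2 ≤ j ≤ n. Then det(C) ≠ 0. -/
open Polynomial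

lemma deriv_finprod {ι : Type*} [DecidableEq ι] (s : Finset ι) (f : ι → Polynomial ℂ) :
    Polynomial.derivative (∏ k ∈ s, f k)
      = ∑ k ∈ s, (∏ l ∈ s.erase k, f l) * Polynomial.derivative (f k) := by
  induction s using Finset.induction_on with
  | empty => simp
  | @insert a s ha ih =>
    have h2 : ∑ k ∈ s, (∏ l ∈ (insert a s).erase k, f l) * Polynomial.derivative (f k)
        = f a * ∑ k ∈ s, (∏ l ∈ s.erase k, f l) * Polynomial.derivative (f k) := by
      rw [Finset.mul_sum]
      refine Finset.sum_congr rfl fun k hk => ?_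
      rw [Finset.erase_insert_of_ne (by rintro rfl; exact ha hk),
        Finset.prod_insert (fun h => ha (Finset.mem_of_mem_erase h)), mul_assoc]
    rw [Finset.prod_insert ha, derivative_mul, ih, Finset.sum_insert ha,
      Finset.erase_insert ha, h2]
    ring

lemma prod_erase_eq {ι : Type*} [DecidableEq ι] (s : Finset ι) (d : ι → ℂ)
    (hd : ∀ k ∈ s, d k ≠ 0) {j : ι} (hj : j ∈ s) :
    ∏ k ∈ s.erase j, d k = (∏ k ∈ s, d k) * (d j)⁻¹ := by
  rw [← Finset.mul_prod_erase _ _ hj, mul_comm (d j), mul_assoc,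
    mul_inv_cancel₀ (hd j hj), mul_one]

/-- If a monic polynomial `p` of degree `n ≥ 2` has simple zeros `z_1, …, z_n` and its
derivative has simple zeros `w_1, …, w_{n-1}`, then the `(n-1) × (n-1)` matrix
`C = ((w_i - z_j)^{-2})`, `1 ≤ i ≤ n-1`, `2 ≤ j ≤ n`, has nonzero determinant. -/
theorem det_C_ne_zero (n : ℕ) (hn : 2 ≤ n)
    (z : Fin n → ℂ) (w : Fin (n - 1) → ℂ)
    (hzinj : Function.Injective z) (hwinj : Function.Injective w)
    (p : Polynomial ℂ)
    (hp : p = ∏ i, (Polynomial.X - Polynomial.C (z i)))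
    (hderiv : Polynomial.derivative p
      = Polynomial.C (n : ℂ) * ∏ j, (Polynomial.X - Polynomial.C (w j))) :
    Matrix.det
      (Matrix.of fun i j : Fin (n - 1) =>
        ((w i - z ⟨(j : ℕ) + 1, by have := j.isLt; omega⟩) ^ 2)⁻¹) ≠ 0 := by
  obtain ⟨m, rfl⟩ : ∃ m, n = m + 1 := ⟨n - 1, by omega⟩
  have hm : 1 ≤ m := by omega
  show Matrix.det (Matrix.of fun i j : Fin m => ((w i - z j.succ) ^ 2)⁻¹) ≠ 0
  intro hdet
  obtain ⟨c, hc0, hc⟩ := Matrix.exists_mulVec_eq_zero_iff.mpr hdet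
  have hc' : ∀ i : Fin m, ∑ j : Fin m, ((w i - z j.succ) ^ 2)⁻¹ * c j = 0 := by
    intro i
    have := congrFun hc i
    simpa [Matrix.mulVec, dotProduct] using this
  classical
  have hp' : Polynomial.derivative p
      = ∑ k : Fin (m+1), ∏ l ∈ Finset.univ.erase k, (X - C (z l)) := by
    rw [hp, deriv_finprod]
    simp
  have hw0 : ∀ i : Fin m, Polynomial.eval (w i) (Polynomial.derivative p) = 0 := by
    intro i
    rw [hderiv, Polynomial.eval_mul, Polynomial.eval_prod]
    have h := Finset.prod_eq_zero (s := (Finset.univ : Finset (Fin (m + 1 - 1))))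
      (f := fun j => Polynomial.eval (w i) (X - C (w j))) (Finset.mem_univ i) (by simp)
    rw [h, mul_zero]
  have hwz : ∀ (i : Fin m) (j : Fin (m+1)), w i - z j ≠ 0 := by
    intro i j
    rw [sub_ne_zero]
    intro hij
    have h1 : Polynomial.eval (z j) (Polynomial.derivative p) =
        ∏ l ∈ Finset.univ.erase j, (z j - z l) := by
      rw [hp', Polynomial.eval_finset_sum, Finset.sum_eq_single j]
      · simp [Polynomial.eval_prod]
      · intro k _ hkj
        rw [Polynomial.eval_prod]
        exact Finset.prod_eq_zero (Finset.mem_erase.mpr ⟨Ne.symm hkj, Finset.mem_univ j⟩)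
          (by simp)
      · simp
    have h2 : ∏ l ∈ Finset.univ.erase j, (z j - z l) ≠ 0 := by
      refine Finset.prod_ne_zero_iff.mpr fun l hl => sub_ne_zero.mpr fun h => ?_
      exact (Finset.mem_erase.mp hl).1 (hzinj h).symm
    exact h2 (h1 ▸ (hij ▸ hw0 i))
  have hsum : ∀ i : Fin m, ∑ j : Fin (m+1), (w i - z j)⁻¹ = 0 := by
    intro i
    have hP : (∏ l : Fin (m+1), (w i - z l)) ≠ 0 :=
      Finset.prod_ne_zero_iff.mpr fun l _ => hwz i l
    have h0 := hw0 i
    rw [hp', Polynomial.eval_finset_sum] at h0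
    simp only [Polynomial.eval_prod, Polynomial.eval_sub, Polynomial.eval_X,
      Polynomial.eval_C] at h0
    rw [Finset.sum_congr rfl (fun k _ =>
      prod_erase_eq Finset.univ (fun l => w i - z l) (fun l _ => hwz i l)
        (Finset.mem_univ k)), ← Finset.mul_sum] at h0
    exact (mul_eq_zero.mp h0).resolve_left hP
  have hczero : ∀ j, c j = 0 := by
      set q : Polynomial ℂ :=
        ∑ j : Fin m, C (c j) * ∏ k ∈ Finset.univ.erase j, (X - C (z k.succ)) with hqdef
      set M : Polynomial ℂ := q + (X - C (z 0)) * Polynomial.derivative q with hMdef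
      have hevalM : ∀ i : Fin m, M.eval (w i) = 0 := by
        intro i
        have ha : w i - z 0 ≠ 0 := hwz i 0
        have hdne : ∀ j ∈ (Finset.univ : Finset (Fin m)),
            (fun j : Fin m => w i - z j.succ) j ≠ 0 := fun j _ => hwz i j.succ
        have hprodE : ∀ j : Fin m, ∏ k ∈ Finset.univ.erase j, (w i - z k.succ)
            = (∏ k : Fin m, (w i - z k.succ)) * (w i - z j.succ)⁻¹ :=
          fun j => prod_erase_eq _ _ hdne (Finset.mem_univ j)
        have hq1 : Polynomial.eval (w i) q
            = (∏ k : Fin m, (w i - z k.succ)) * ∑ j, c j * (w i - z j.succ)⁻¹ := by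
          calc Polynomial.eval (w i) q
              = ∑ j : Fin m, c j *
                  ((∏ k : Fin m, (w i - z k.succ)) * (w i - z j.succ)⁻¹) := by
                rw [hqdef, Polynomial.eval_finset_sum]
                refine Finset.sum_congr rfl fun j _ => ?_
                rw [Polynomial.eval_mul, Polynomial.eval_C, Polynomial.eval_prod]
                simp only [Polynomial.eval_sub, Polynomial.eval_X, Polynomial.eval_C]
                rw [hprodE j]
            _ = _ := by
                rw [Finset.mul_sum]
                exact Finset.sum_congr rfl fun j _ => by ring
        have hq2 : Polynomial.eval (w i) (Polynomial.derivative q)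
            = (∏ k : Fin m, (w i - z k.succ)) *
                ((∑ l : Fin m, (w i - z l.succ)⁻¹) * (∑ j, c j * (w i - z j.succ)⁻¹)
                  - ∑ j, c j * ((w i - z j.succ)⁻¹) ^ 2) := by
          have step : ∀ j : Fin m,
              Polynomial.eval (w i) (Polynomial.derivative
                (C (c j) * ∏ k ∈ Finset.univ.erase j, (X - C (z k.succ))))
              = c j * ((∏ k : Fin m, (w i - z k.succ)) * (w i - z j.succ)⁻¹ *
                  ((∑ l : Fin m, (w i - z l.succ)⁻¹) - (w i - z j.succ)⁻¹)) := by
            intro j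
            calc Polynomial.eval (w i) (Polynomial.derivative
                  (C (c j) * ∏ k ∈ Finset.univ.erase j, (X - C (z k.succ))))
                = c j * ∑ l ∈ Finset.univ.erase j,
                    ((∏ k : Fin m, (w i - z k.succ)) * (w i - z j.succ)⁻¹
                      * (w i - z l.succ)⁻¹) := by
                  rw [Polynomial.derivative_C_mul, deriv_finprod, Polynomial.eval_mul,
                    Polynomial.eval_C, Polynomial.eval_finset_sum]
                  refine congrArg _ (Finset.sum_congr rfl fun l hl => ?_)
                  rw [Polynomial.eval_mul, Polynomial.eval_prod]
                  simp only [Polynomial.derivative_sub, Polynomial.derivative_X,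
                    Polynomial.derivative_C, sub_zero, Polynomial.eval_one, mul_one,
                    Polynomial.eval_sub, Polynomial.eval_X, Polynomial.eval_C]
                  rw [prod_erase_eq _ _ (fun k _ => hwz i k.succ) hl, hprodE j]
              _ = _ := by
                  rw [← Finset.mul_sum, Finset.sum_erase_eq_sub (Finset.mem_univ j)]
          calc Polynomial.eval (w i) (Polynomial.derivative q)
              = ∑ j : Fin m, c j * ((∏ k : Fin m, (w i - z k.succ)) * (w i - z j.succ)⁻¹ *
                  ((∑ l : Fin m, (w i - z l.succ)⁻¹) - (w i - z j.succ)⁻¹)) := by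
                rw [hqdef, map_sum, Polynomial.eval_finset_sum]
                exact Finset.sum_congr rfl fun j _ => step j
            _ = ∑ j : Fin m, ((∏ k : Fin m, (w i - z k.succ)) *
                  ((∑ l : Fin m, (w i - z l.succ)⁻¹) * (c j * (w i - z j.succ)⁻¹))
                  - (∏ k : Fin m, (w i - z k.succ)) * (c j * ((w i - z j.succ)⁻¹) ^ 2)) :=
                Finset.sum_congr rfl fun j _ => by ring
            _ = _ := by
                rw [Finset.sum_sub_distrib, ← Finset.mul_sum, ← Finset.mul_sum,
                  ← Finset.mul_sum, ← mul_sub]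
        have hH : ∑ j : Fin m, c j * ((w i - z j.succ)⁻¹) ^ 2 = 0 := by
          rw [← hc' i]
          exact Finset.sum_congr rfl fun j _ => by rw [inv_pow, mul_comm]
        have hSval : (∑ l : Fin m, (w i - z l.succ)⁻¹) = -(w i - z 0)⁻¹ := by
          have h := hsum i
          rw [Fin.sum_univ_succ] at h
          linear_combination h
        rw [hMdef, Polynomial.eval_add, Polynomial.eval_mul, Polynomial.eval_sub,
          Polynomial.eval_X, Polynomial.eval_C, hq1, hq2, hH, sub_zero, hSval]
        field_simp
        ring
      have hqdeg : q.natDegree ≤ m - 1 := by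
        refine Polynomial.natDegree_sum_le_of_forall_le _ _ fun j _ => ?_
        refine (Polynomial.natDegree_mul_le).trans ?_
        rw [Polynomial.natDegree_C, zero_add]
        refine (Polynomial.natDegree_prod_le _ _).trans (le_of_eq ?_)
        calc ∑ k ∈ Finset.univ.erase j, (X - C (z k.succ)).natDegree
            = ∑ k ∈ Finset.univ.erase j, 1 :=
              Finset.sum_congr rfl fun k _ => Polynomial.natDegree_X_sub_C _
          _ = m - 1 := by simp [Finset.card_erase_of_mem]
      have hMdeg : M.natDegree < m := by
        by_cases h0 : q.natDegree = 0
        · have hd0 : Polynomial.derivative q = 0 := by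
            rw [Polynomial.eq_C_of_natDegree_eq_zero h0, Polynomial.derivative_C]
          have : M = q := by rw [hMdef, hd0, mul_zero, add_zero]
          rw [this]
          omega
        · have h1 : ((X - C (z 0)) * Polynomial.derivative q).natDegree ≤ q.natDegree := by
            refine Polynomial.natDegree_mul_le.trans ?_
            rw [Polynomial.natDegree_X_sub_C]
            have := Polynomial.natDegree_derivative_lt h0
            omega
          have h2 : M.natDegree ≤ q.natDegree := by
            rw [hMdef]
            exact (Polynomial.natDegree_add_le _ _).trans (by omega)
          omega
      have hM0 : M = 0 := by
        refine Polynomial.eq_zero_of_natDegree_lt_card_of_eval_eq_zero M hwinj hevalM ?_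
        simpa using hMdeg
      have hq0 : q = 0 := by
        have hder : Polynomial.derivative ((X - C (z 0)) * q) = 0 := by
          rw [Polynomial.derivative_mul, Polynomial.derivative_sub, Polynomial.derivative_X,
            Polynomial.derivative_C, sub_zero, one_mul, ← hMdef]
          exact hM0
        have h2 := Polynomial.eq_C_of_natDegree_eq_zero
          (Polynomial.natDegree_eq_zero_of_derivative_eq_zero hder)
        have h3 := congrArg (Polynomial.eval (z 0)) h2
        simp only [Polynomial.eval_mul, Polynomial.eval_sub, Polynomial.eval_X,
          Polynomial.eval_C, sub_self, zero_mul] at h3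
        rw [← h3, map_zero] at h2
        rcases mul_eq_zero.mp h2 with h | h
        · exact absurd h (Polynomial.X_sub_C_ne_zero _)
        · exact h
      intro j
      have h5 : Polynomial.eval (z j.succ)
          (∑ j : Fin m, C (c j) * ∏ k ∈ Finset.univ.erase j, (X - C (z k.succ))) = 0 := by
        rw [← hqdef, hq0, Polynomial.eval_zero]
      rw [Polynomial.eval_finset_sum, Finset.sum_eq_single j
        (fun k _ hkj => by
          rw [Polynomial.eval_mul, Polynomial.eval_prod,
            Finset.prod_eq_zero (Finset.mem_erase.mpr ⟨Ne.symm hkj, Finset.mem_univ j⟩)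
              (by simp), mul_zero])
        (by simp)] at h5
      rw [Polynomial.eval_mul, Polynomial.eval_C, Polynomial.eval_prod] at h5
      simp only [Polynomial.eval_sub, Polynomial.eval_X, Polynomial.eval_C] at h5
      have hne2 : ∏ k ∈ Finset.univ.erase j, (z j.succ - z k.succ) ≠ 0 :=
        Finset.prod_ne_zero_iff.mpr fun k hk => sub_ne_zero.mpr fun h =>
          (Finset.mem_erase.mp hk).1 ((Fin.succ_injective _ (hzinj h)).symm)
      exact (mul_eq_zero.mp h5).resolve_right hne2
  exact hc0 (funext hczero)
end

section
/- Let n ≥ 3 and let p(z) = z^n − z, whose zeros are z_1 = 0 and z_j = e^{2πi(j−2)/(n−1)} for 2 ≤ j ≤ n, and whose critical points are w_i = (1/n)^{1/(n−1)} e^{2πi(i−1)/(n−1)} for 1 ≤ i ≤ n−1. Define the (n−1)×n complex matrix A = (α_{ij}) by α_{i1} = −(n+1)/(n·w_i) and α_{ij} = w_i/(n·(w_i − z_j)²) for 2 ≤ j ≤ n. Then A is not positively singular. -/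
open Complex Polynomial

/-- The `(n-1) × n` matrix `A = (α_{ij})` with `α_{i1} = -(n+1)/(n w_i)` and
`α_{ij} = w_i / (n (w_i - z_j)²)` for `2 ≤ j ≤ n`. -/
noncomputable def Amat (n : ℕ) : Matrix (Fin (n - 1)) (Fin n) ℂ :=
  Matrix.of fun i j =>
    if (j : ℕ) = 0 then -((n : ℂ) + 1) / ((n : ℂ) * wpt n i)
    else wpt n i / ((n : ℂ) * (wpt n i - zpt n j) ^ 2)

/-!
For each critical point `w` of `p(z) = z^n - z` one has `n w^{n-1} = 1`. Writing `m = n - 1`,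
`(w^m - 1) / (w - ζ)` is a geometric sum for every `m`-th root of unity `ζ`, and averaging over `ζ`
keeps only the terms of total degree `m - 1`: `∑_ζ ζ / (w - ζ)^2 = m^2 w^{m-1} / (w^m - 1)^2`.
Together these say that every row of `A` pairs with the vector of zeros `z` to `∑_j α_{ij} z_j = 1`.
So if nonnegative `μ` annihilated every column of `A`, then `0 = μᵀ A z = ∑ μ_i`, forcing `μ = 0`.
-/

open Finset Matrix

theorem Nat.dvd_sub_one_sub_add_sub_one_sub_add_one_iff {m s t : ℕ} (hs : s < m) (ht : t < m) :
    m ∣ (m - 1 - s) + (m - 1 - t) + 1 ↔ t = m - 1 - s := by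
  constructor
  · rintro ⟨c, hc⟩
    have hc2 : c < 2 := Nat.lt_of_mul_lt_mul_left (a := m) (by omega)
    interval_cases c <;> omega
  · intro h
    exact ⟨1, by omega⟩

namespace IsPrimitiveRoot

variable {K : Type*} [Field K] {ζ : K} {m : ℕ}

theorem sum_range_pow_pow (hζ : IsPrimitiveRoot ζ m) (r : ℕ) :
    ∑ k ∈ range m, (ζ ^ k) ^ r = if m ∣ r then (m : K) else 0 := by
  simp_rw [pow_right_comm ζ _ r]
  split_ifs with h
  · simp [(hζ.pow_eq_one_iff_dvd r).mpr h]
  · have hr : ζ ^ r ≠ 1 := mt (hζ.pow_eq_one_iff_dvd r).mp h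
    rw [geom_sum_eq hr, pow_right_comm, hζ.pow_eq_one, one_pow, sub_self, zero_div]

theorem sum_range_mul_geom_sum₂_sq (hζ : IsPrimitiveRoot ζ m) (w : K) :
    ∑ k ∈ range m, ζ ^ k * (∑ t ∈ range m, w ^ t * (ζ ^ k) ^ (m - 1 - t)) ^ 2 =
      m ^ 2 * w ^ (m - 1) := by
  calc ∑ k ∈ range m, ζ ^ k * (∑ t ∈ range m, w ^ t * (ζ ^ k) ^ (m - 1 - t)) ^ 2
      = ∑ s ∈ range m, ∑ t ∈ range m,
          w ^ (s + t) * ∑ k ∈ range m, (ζ ^ k) ^ ((m - 1 - s) + (m - 1 - t) + 1) := by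
        simp_rw [sq, sum_mul_sum, mul_sum]
        rw [sum_comm]
        refine sum_congr rfl fun s _ => ?_
        rw [sum_comm]
        refine sum_congr rfl fun t _ => sum_congr rfl fun k _ => ?_
        ring
    _ = ∑ s ∈ range m, w ^ (m - 1) * m := by
        refine sum_congr rfl fun s hs => ?_
        rw [mem_range] at hs
        have horth : ∀ t ∈ range m, w ^ (s + t) *
            ∑ k ∈ range m, (ζ ^ k) ^ ((m - 1 - s) + (m - 1 - t) + 1) =
              if t = m - 1 - s then w ^ (m - 1) * m else 0 := by
          intro t ht
          rw [hζ.sum_range_pow_pow, if_congr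
            (Nat.dvd_sub_one_sub_add_sub_one_sub_add_one_iff hs (mem_range.mp ht)) rfl rfl]
          split_ifs with h
          · rw [h, Nat.add_sub_cancel' (by omega)]
          · rw [mul_zero]
        rw [sum_congr rfl horth, sum_ite_eq' (range m), if_pos (mem_range.mpr (by omega))]
    _ = m ^ 2 * w ^ (m - 1) := by
        rw [sum_const, card_range, nsmul_eq_mul]
        ring

theorem sum_range_pow_div_sub_pow_sq (hζ : IsPrimitiveRoot ζ m) {w : K} (hw : w ^ m ≠ 1) :
    ∑ k ∈ range m, ζ ^ k / (w - ζ ^ k) ^ 2 = m ^ 2 * w ^ (m - 1) / (w ^ m - 1) ^ 2 := by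
  have hfactor : ∀ k, (∑ t ∈ range m, w ^ t * (ζ ^ k) ^ (m - 1 - t)) * (w - ζ ^ k) = w ^ m - 1 := by
    intro k
    rw [geom_sum₂_mul, pow_right_comm, hζ.pow_eq_one, one_pow]
  have hw' : w ^ m - 1 ≠ 0 := sub_ne_zero.mpr hw
  rw [← hζ.sum_range_mul_geom_sum₂_sq w, sum_div]
  refine sum_congr rfl fun k _ => ?_
  set S := ∑ t ∈ range m, w ^ t * (ζ ^ k) ^ (m - 1 - t)
  have hS : S ≠ 0 := left_ne_zero_of_mul (hfactor k ▸ hw')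
  rw [← hfactor k, mul_pow, mul_comm (ζ ^ k), mul_div_mul_left _ _ (pow_ne_zero 2 hS)]

theorem sum_range_div_mul_sub_pow_sq_mul_pow_eq_one (hζ : IsPrimitiveRoot ζ m)
    (hm : (m : K) ≠ 0) {w : K} (hw : (m + 1) * w ^ m = 1) :
    ∑ k ∈ range m, w / ((m + 1) * (w - ζ ^ k) ^ 2) * ζ ^ k = 1 := by
  have hm' : 1 ≤ m := Nat.one_le_iff_ne_zero.mpr (by rintro rfl; exact hm Nat.cast_zero)
  have hwm : w ^ m ≠ 0 := right_ne_zero_of_mul_eq_one hw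
  have hsub : w ^ m - 1 = -(m * w ^ m) := by rw [← hw]; ring
  have hw1 : w ^ m ≠ 1 := by
    rw [← sub_ne_zero, hsub, neg_ne_zero]
    exact mul_ne_zero hm hwm
  calc ∑ k ∈ range m, w / ((m + 1) * (w - ζ ^ k) ^ 2) * ζ ^ k
      = w / (m + 1) * ∑ k ∈ range m, ζ ^ k / (w - ζ ^ k) ^ 2 := by
        rw [mul_sum]
        exact sum_congr rfl fun k _ => by rw [div_mul_eq_mul_div, mul_div_mul_comm]
    _ = m ^ 2 * (w * w ^ (m - 1)) / ((m + 1) * (w ^ m - 1) ^ 2) := by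
        rw [hζ.sum_range_pow_div_sub_pow_sq hw1, mul_div_mul_comm]
        ring
    _ = 1 := by
        rw [← pow_succ', Nat.sub_add_cancel hm', hsub,
          div_eq_one_iff_eq (by simp [hm, hwm, left_ne_zero_of_mul_eq_one hw])]
        linear_combination (-(m ^ 2 * w ^ m)) * hw

end IsPrimitiveRoot

theorem not_positivelySingular_of_mulVec_eq_one {m k : ℕ} {M : Matrix (Fin m) (Fin k) ℂ}
    {z : Fin k → ℂ} (hz : M *ᵥ z = 1) : ¬ PositivelySingular M := by
  rintro ⟨μ, hμ0, ⟨i, hi⟩, hμM⟩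
  have hsum : ∑ i, (μ i : ℂ) = 0 := by
    have h := dotProduct_mulVec (fun i => (μ i : ℂ)) M z
    rw [hz, show (fun i => (μ i : ℂ)) ᵥ* M = 0 from funext hμM, zero_dotProduct] at h
    simpa [dotProduct] using h
  have hsumR : ∑ i, μ i = 0 := by exact_mod_cast hsum
  exact hi ((sum_eq_zero_iff_of_nonneg fun i _ => hμ0 i).mp hsumR i (mem_univ i))

theorem zpt_zero (m : ℕ) : zpt (m + 1) 0 = 0 := if_pos rfl

theorem zpt_succ (m : ℕ) (j : Fin m) :
    zpt (m + 1) j.succ = exp (2 * Real.pi * I / m) ^ (j : ℕ) := by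
  rw [zpt, Fin.val_succ, if_neg (Nat.succ_ne_zero _), ← exp_nat_mul]
  congr 1
  push_cast
  ring

theorem natCast_mul_wpt_pow_sub_one (n : ℕ) (i : Fin (n - 1)) :
    (n : ℂ) * wpt n i ^ (n - 1) = 1 := by
  have hn : 2 ≤ n := by have := i.isLt; omega
  have hcast : ((n - 1 : ℕ) : ℝ) = (n : ℝ) - 1 := by rw [Nat.cast_sub (by omega), Nat.cast_one]
  have hn1 : (n : ℝ) - 1 ≠ 0 := by rw [← hcast]; exact_mod_cast (by omega : n - 1 ≠ 0)
  have hmod : (((1 : ℝ) / n) ^ ((1 : ℝ) / ((n : ℝ) - 1))) ^ (n - 1) = (n : ℝ)⁻¹ := by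
    rw [← Real.rpow_natCast, ← Real.rpow_mul (by positivity), hcast, one_div_mul_cancel hn1,
      Real.rpow_one, one_div]
  have harg : exp (2 * Real.pi * I * ((i : ℕ) : ℂ) / ((n : ℂ) - 1)) ^ (n - 1) = 1 := by
    have hcastC : ((n - 1 : ℕ) : ℂ) = (n : ℂ) - 1 := by exact_mod_cast hcast
    have hn1C : (n : ℂ) - 1 ≠ 0 := by exact_mod_cast hn1
    rw [← exp_nat_mul, hcastC, mul_div_cancel₀ _ hn1C, mul_comm, exp_nat_mul_two_pi_mul_I]
  rw [wpt, mul_pow, harg, mul_one, ← ofReal_pow, hmod, ofReal_inv, ofReal_natCast]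
  exact mul_inv_cancel₀ (by exact_mod_cast (by omega : n ≠ 0))

theorem Amat_mulVec_zpt (n : ℕ) : Amat n *ᵥ zpt n = 1 := by
  ext i
  obtain ⟨m, rfl⟩ : ∃ m, n = m + 1 := ⟨n - 1, by have := i.isLt; omega⟩
  have hm : m ≠ 0 := by have := i.isLt; omega
  have hw : ((m : ℂ) + 1) * wpt (m + 1) i ^ m = 1 := by
    simpa using natCast_mul_wpt_pow_sub_one (m + 1) i
  simp only [mulVec, dotProduct, Fin.sum_univ_succ, zpt_zero, zpt_succ, mul_zero, zero_add, Amat,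
    of_apply, Fin.val_succ, Nat.succ_ne_zero, if_false, Pi.one_apply, Nat.cast_succ]
  rw [Fin.sum_univ_eq_sum_range (fun k => wpt (m + 1) i /
    ((m + 1) * (wpt (m + 1) i - exp (2 * Real.pi * I / m) ^ k) ^ 2) * exp (2 * Real.pi * I / m) ^ k)]
  exact (isPrimitiveRoot_exp m hm).sum_range_div_mul_sub_pow_sq_mul_pow_eq_one
    (Nat.cast_ne_zero.mpr hm) hw

theorem Amat_not_positivelySingular_general (n : ℕ) :
    ¬ PositivelySingular (Amat n) :=
  not_positivelySingular_of_mulVec_eq_one (Amat_mulVec_zpt n)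

/-- For `p(z) = z^n - z`, `n ≥ 3`, the matrix `A(p)` is not positively singular. -/
theorem Amat_not_positivelySingular (n : ℕ) (hn : 3 ≤ n) :
    ¬ PositivelySingular (Amat n) :=
  Amat_not_positivelySingular_general n
end

section
/- For every integer n ≥ 5 one has sin(π/(2(n−1)))/sin(π/n) < (1/n)^{1/(n−1)}. -/
/-!
Both sines are compared with their Taylor polynomials: for `n ≥ 5` the smaller angle
`π / (2(n-1))` is at most `5/8` of `b = π / n ≤ 2/3`, and `sin x ≤ x - x³/6 + x⁵/100`,
`x - x³/6 ≤ sin x` give `3 sin (5b/8) < 2 sin b`. So the ratio is below `2/3`, while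
`n (2/3)^(n-1) ≤ 1` puts `2/3` below the `(n-1)`-st root of `1/n`.
-/

open Real

lemma sin_le_sub_cube_add_fifth {x : ℝ} (hx : |x| ≤ 1) :
    sin x ≤ x - x ^ 3 / 6 + |x| ^ 5 / 100 := by
  linarith [(abs_le.1 (sin_bound hx)).2]

lemma three_mul_sin_lt_two_mul_sin {a b : ℝ} (ha : 0 ≤ a) (hab : a ≤ 5 * b / 8) (hb₀ : 0 < b)
    (hb : b ≤ 2 / 3) : 3 * sin a < 2 * sin b := by
  have hπ : 2 / 3 < π / 2 := by linarith [pi_gt_three]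
  have hc : |5 * b / 8| ≤ 1 := by rw [abs_of_pos (by positivity)]; linarith
  have h_mono : sin a ≤ sin (5 * b / 8) :=
    sin_le_sin_of_le_of_le_pi_div_two (by linarith [pi_pos]) (by linarith) hab
  have h_upper := sin_le_sub_cube_add_fifth hc
  rw [abs_of_pos (by positivity)] at h_upper
  have h_lower := sin_ge_sub_cube hb₀.le
  have h_poly : 3 * (5 * b / 8 - (5 * b / 8) ^ 3 / 6 + (5 * b / 8) ^ 5 / 100)
      < 2 * (b - b ^ 3 / 6) := by
    have hb2 : b ^ 2 ≤ 4 / 9 := by nlinarith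
    have hb4 : b ^ 4 ≤ 16 / 81 := by nlinarith
    nlinarith [mul_pos hb₀ (pow_pos hb₀ 2), mul_pos hb₀ (pow_pos hb₀ 4)]
  linarith

lemma natCast_add_one_mul_two_thirds_pow_le_one {m : ℕ} (hm : 4 ≤ m) :
    ((m : ℝ) + 1) * (2 / 3) ^ m ≤ 1 := by
  induction m, hm using Nat.le_induction with
  | base => norm_num
  | succ m hm ih =>
    have hm' : (4 : ℝ) ≤ m := by exact_mod_cast hm
    have hpow : (0 : ℝ) ≤ (2 / 3) ^ m := by positivity
    push_cast
    rw [pow_succ]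
    nlinarith

lemma two_thirds_le_rpow_inv {m : ℕ} (hm : 4 ≤ m) :
    (2 / 3 : ℝ) ≤ (1 / ((m : ℝ) + 1)) ^ (m : ℝ)⁻¹ := by
  have hm₀ : (0 : ℝ) < m := by exact_mod_cast (by omega : 0 < m)
  rw [le_rpow_inv_iff_of_pos (by norm_num) (by positivity) hm₀, rpow_natCast,
    le_div_iff₀ (by positivity), mul_comm]
  exact natCast_add_one_mul_two_thirds_pow_le_one hm

/-- For every integer `n ≥ 5`, `sin(π/(2(n-1)))/sin(π/n) < (1/n)^{1/(n-1)}`. -/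
theorem sin_ratio_lt_root (n : ℕ) (hn : 5 ≤ n) :
    Real.sin (Real.pi / (2 * ((n : ℝ) - 1))) / Real.sin (Real.pi / n)
      < ((1 : ℝ) / n) ^ ((1 : ℝ) / ((n : ℝ) - 1)) := by
  obtain ⟨m, rfl⟩ : ∃ m, n = m + 1 := ⟨n - 1, by omega⟩
  have hm₄ : 4 ≤ m := by omega
  have hm : (4 : ℝ) ≤ m := by exact_mod_cast hm₄
  push_cast
  rw [add_sub_cancel_right, one_div (m : ℝ)]
  have h_angle : π / (2 * m) ≤ 5 * (π / (m + 1)) / 8 := by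
    rw [div_le_iff₀ (by positivity)]
    field_simp
    nlinarith [pi_pos]
  have h_small : π / (m + 1) ≤ 2 / 3 := by
    rw [div_le_iff₀ (by positivity)]
    linarith [pi_lt_d2]
  have h_sin_pos : 0 < sin (π / (m + 1)) :=
    sin_pos_of_pos_of_lt_pi (by positivity) (by linarith [pi_gt_three])
  calc sin (π / (2 * m)) / sin (π / (m + 1)) < 2 / 3 := by
        rw [div_lt_iff₀ h_sin_pos]
        linarith [three_mul_sin_lt_two_mul_sin (by positivity) h_angle (by positivity) h_small]
    _ ≤ (1 / ((m : ℝ) + 1)) ^ (m : ℝ)⁻¹ := two_thirds_le_rpow_inv hm₄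
end

section
/- Let q be a monic complex polynomial of degree n ≥ 2, let α ∈ ℂ be a zero of q, and let R > 0 be such that every critical point w of q (i.e., every root of q') satisfies |w − α| = R. Then for every integer 0 ≤ k ≤ n−1 one has (n−k−1)!·n·R^{2k}·q^{(k+1)}(α) = k!·q'(α)·conj(q^{(n−k)}(α)). -/
/-!
Put `T(z) = q'(z + α)`, so that `T = n ∏ (z - βᵢ)` with `|βᵢ| = R` and the `j`-th coefficient
of `T` is `q^{(j+1)}(α) / j!`. Since `β * conj β = R²`, each factor satisfies
`R² z - β = -β (1 - conj β z)`, hence `n T(R² z) = T(0) z^{n-1} conj(T)(1/z)`, i.e.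
`n R^{2k} T_k = T_0 conj(T_{n-1-k})`, which is the identity after clearing factorials.
-/

open Polynomial ComplexConjugate

namespace Polynomial

theorem reverse_multiset_prod {R : Type*} [CommSemiring R] [NoZeroDivisors R]
    (s : Multiset R[X]) : s.prod.reverse = (s.map reverse).prod := by
  induction s using Multiset.induction_on with
  | empty => simpa using reverse_C (1 : R)
  | cons p s ih => simp [reverse_mul_of_domain, ih]

theorem reverse_X_sub_C {R : Type*} [Ring R] (t : R) : (X - C t).reverse = 1 - C t * X := by
  nontriviality R
  have hX : (X : R[X]).reverse = 1 := by rw [← one_mul X, reverse_mul_X, ← C_1, reverse_C]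
  rw [sub_eq_add_neg, ← C_neg, reverse_add_C, hX, natDegree_X, pow_one, C_neg, neg_mul,
    ← sub_eq_add_neg]

theorem X_sub_C_comp_C_mul_X_of_mul_conj {β a : ℂ} (h : β * conj β = a) :
    (X - C β).comp (C a * X) = C (-β) * (X - C (conj β)).reverse := by
  rw [reverse_X_sub_C, ← h]
  simp only [sub_comp, X_comp, C_comp, C_mul, C_neg]
  ring

theorem multiset_prod_X_sub_C_comp_C_mul_X (s : Multiset ℂ) (r : ℝ) (hs : ∀ β ∈ s, ‖β‖ = r) :
    (s.map (X - C ·)).prod.comp (C ((r : ℂ) ^ 2) * X) =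
      C ((s.map (X - C ·)).prod.coeff 0) *
        ((s.map (X - C ·)).prod.map (starRingEnd ℂ)).reverse := by
  have hfactor (β : ℂ) (hβ : β ∈ s) : (X - C β).comp (C ((r : ℂ) ^ 2) * X) =
      C (-β) * (X - C (conj β)).reverse := by
    refine X_sub_C_comp_C_mul_X_of_mul_conj ?_
    rw [Complex.mul_conj, Complex.normSq_eq_norm_sq, hs β hβ]
    push_cast; ring
  calc (s.map (X - C ·)).prod.comp (C ((r : ℂ) ^ 2) * X)
      = (s.map fun β => C (-β) * (X - C (conj β)).reverse).prod := by
        rw [multiset_prod_comp, Multiset.map_map]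
        exact congrArg _ (Multiset.map_congr rfl hfactor)
    _ = C (s.map (-·)).prod * ((s.map fun β => X - C (conj β)).prod).reverse := by
        rw [Multiset.prod_map_mul, reverse_multiset_prod, map_multiset_prod, Multiset.map_map,
          Multiset.map_map]
        rfl
    _ = _ := by
        simp [coeff_zero_eq_eval_zero, eval_multiset_prod, Polynomial.map_multiset_prod,
          Multiset.map_map]

theorem C_conj_leadingCoeff_mul_comp_C_mul_X (p : ℂ[X]) (r : ℝ) (hp : ∀ β ∈ p.roots, ‖β‖ = r) :
    C (conj p.leadingCoeff) * p.comp (C ((r : ℂ) ^ 2) * X) =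
      C (p.coeff 0) * (p.map (starRingEnd ℂ)).reverse := by
  have hprod := multiset_prod_X_sub_C_comp_C_mul_X p.roots r hp
  have hsplit := (IsAlgClosed.splits p).eq_prod_roots
  set c := p.leadingCoeff
  set g := (p.roots.map (X - C ·)).prod
  rw [hsplit, mul_comp, C_comp, hprod, coeff_C_mul, Polynomial.map_mul, map_C,
    reverse_mul_of_domain, reverse_C]
  simp only [C_mul]
  ring

theorem conj_leadingCoeff_mul_pow_mul_coeff (p : ℂ[X]) (r : ℝ) (hp : ∀ β ∈ p.roots, ‖β‖ = r)
    {k : ℕ} (hk : k ≤ p.natDegree) :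
    conj p.leadingCoeff * (r : ℂ) ^ (2 * k) * p.coeff k =
      p.coeff 0 * conj (p.coeff (p.natDegree - k)) := by
  have h := congrArg (coeff · k) (C_conj_leadingCoeff_mul_comp_C_mul_X p r hp)
  simp only [coeff_C_mul, comp_C_mul_X_coeff, coeff_reverse, natDegree_map, revAt_le hk,
    coeff_map] at h
  linear_combination h

theorem eval_iterate_derivative_eq_factorial_mul_coeff_taylor {R : Type*} [CommSemiring R]
    (p : R[X]) (r : R) (j : ℕ) :
    (derivative^[j] p).eval r = j.factorial * (taylor r p).coeff j := by
  rw [taylor_coeff, ← factorial_smul_hasseDeriv]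
  simp [nsmul_eq_mul]

end Polynomial

theorem derivative_conjugation_identity_general (n : ℕ) (hn : 2 ≤ n)
    (q : Polynomial ℂ) (hq : q.Monic) (hdeg : q.natDegree = n)
    (α : ℂ) (R : ℝ)
    (hcrit : ∀ w : ℂ, (Polynomial.derivative q).eval w = 0 → ‖w - α‖ = R) :
    ∀ k : ℕ, k ≤ n - 1 →
      ((Nat.factorial (n - k - 1) : ℂ)) * (n : ℂ) * (R : ℂ) ^ (2 * k) *
          ((Polynomial.derivative^[k + 1] q).eval α)
        = ((Nat.factorial k : ℂ)) * ((Polynomial.derivative q).eval α) *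
          (starRingEnd ℂ) ((Polynomial.derivative^[n - k] q).eval α) := by
  intro k hk
  set T := taylor α (derivative q)
  have hTdeg : T.natDegree = n - 1 := by rw [natDegree_taylor, natDegree_derivative, hdeg]
  have hTlead : T.leadingCoeff = n := by
    rw [leadingCoeff_taylor, leadingCoeff_derivative, hq.leadingCoeff, hdeg, one_mul]
  have hTroots : ∀ β ∈ T.roots, ‖β‖ = R := fun β hβ => by
    have hcritβ := (mem_roots'.mp hβ).2
    rw [IsRoot, taylor_eval] at hcritβ
    simpa using hcrit _ hcritβ
  have hself := conj_leadingCoeff_mul_pow_mul_coeff T R hTroots (hk.trans hTdeg.ge)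
  rw [hTlead, hTdeg, map_natCast, Nat.sub_right_comm] at hself
  obtain ⟨m, hm⟩ : ∃ m, n - k = m + 1 := ⟨n - k - 1, by omega⟩
  rw [hm, Nat.add_sub_cancel] at hself ⊢
  rw [Function.iterate_succ_apply, Function.iterate_succ_apply,
    eval_iterate_derivative_eq_factorial_mul_coeff_taylor,
    eval_iterate_derivative_eq_factorial_mul_coeff_taylor, ← taylor_coeff_zero (r := α)]
  simp only [map_mul, map_natCast]
  linear_combination (m.factorial * k.factorial : ℂ) * hself

/-- If `q` is monic of degree `n ≥ 2`, `q(α) = 0`, and all critical points of `q` lie on the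
circle `|w - α| = R`, then `(n-k-1)! · n · R^{2k} · q^{(k+1)}(α) = k! · q'(α) · conj(q^{(n-k)}(α))`
for `0 ≤ k ≤ n-1`. -/
theorem derivative_conjugation_identity (n : ℕ) (hn : 2 ≤ n)
    (q : Polynomial ℂ) (hq : q.Monic) (hdeg : q.natDegree = n)
    (α : ℂ) (hα : q.eval α = 0) (R : ℝ) (hR : 0 < R)
    (hcrit : ∀ w : ℂ, (Polynomial.derivative q).eval w = 0 → ‖w - α‖ = R) :
    ∀ k : ℕ, k ≤ n - 1 →
      ((Nat.factorial (n - k - 1) : ℂ)) * (n : ℂ) * (R : ℂ) ^ (2 * k) *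
          ((Polynomial.derivative^[k + 1] q).eval α)
        = ((Nat.factorial k : ℂ)) * ((Polynomial.derivative q).eval α) *
          (starRingEnd ℂ) ((Polynomial.derivative^[n - k] q).eval α) :=
  derivative_conjugation_identity_general n hn q hq hdeg α R hcrit
end

section
/- For every integer n ≥ 3, the set {x ∈ [1, n−2] : n^{2x/(n−1)}·(n − x) − n·(x + 1) = 0} equals {(n−1)/2}. -/
/-!
Taking logarithms, `x` solves the equation iff `h x = 0`, where
`h x = 2x log n / (n - 1) + log (n - x) - log (x + 1) - log n`.
The reflection `x ↦ n - 1 - x` changes the sign of `h`, so `h` vanishes at the midpoint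
`m = (n - 1) / 2`, and `h` is strictly convex on `(-1, m]`. For `n ≥ 4` one has `h 1 < 0`,
i.e. `n² < (2n / (n - 1))^(n - 1)`, so convexity makes `h` negative on `[1, m)` and the
reflection makes it positive on `(m, n - 2]`. For `n = 3` the interval is the single point `m`.
-/

open Real Set

noncomputable def criticalLog (N x : ℝ) : ℝ :=
  2 * x / (N - 1) * log N + log (N - x) - log (x + 1) - log N

section
variable {N x : ℝ}

theorem criticalEquation_iff_criticalLog_eq_zero (hN : 0 < N) (hxN : x < N) (hx : -1 < x) :
    N ^ (2 * x / (N - 1)) * (N - x) - N * (x + 1) = 0 ↔ criticalLog N x = 0 := by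
  have hlhs : 0 < N ^ (2 * x / (N - 1)) * (N - x) := by
    have := rpow_pos_of_pos hN (2 * x / (N - 1)); nlinarith
  have hrhs : 0 < N * (x + 1) := mul_pos hN (by linarith)
  rw [sub_eq_zero, ← log_injOn_pos.eq_iff hlhs hrhs, log_mul (by positivity) (by linarith),
    log_mul hN.ne' (by linarith), log_rpow hN, criticalLog, ← sub_eq_zero]
  constructor <;> intro h <;> linarith

theorem criticalLog_sub_one_sub (hN : N ≠ 1) : criticalLog N (N - 1 - x) = -criticalLog N x := by
  have hN' : N - 1 ≠ 0 := sub_ne_zero.2 hN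
  simp only [criticalLog, show N - (N - 1 - x) = x + 1 by ring,
    show N - 1 - x + 1 = N - x by ring]
  field_simp
  ring

theorem criticalLog_midpoint (hN : N ≠ 1) : criticalLog N ((N - 1) / 2) = 0 := by
  have h := criticalLog_sub_one_sub (x := (N - 1) / 2) hN
  rw [show N - 1 - (N - 1) / 2 = (N - 1) / 2 by ring] at h
  linarith

theorem hasDerivAt_criticalLog (hxN : N - x ≠ 0) (hx : x + 1 ≠ 0) :
    HasDerivAt (criticalLog N) (2 / (N - 1) * log N - 1 / (N - x) - 1 / (x + 1)) x := by
  have hlin : HasDerivAt (fun t => 2 * t / (N - 1) * log N) (2 / (N - 1) * log N) x := by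
    simpa using (((hasDerivAt_id x).const_mul 2).div_const (N - 1)).mul_const (log N)
  have hl1 : HasDerivAt (fun t => log (N - t)) (-1 / (N - x)) x := by
    simpa using ((hasDerivAt_id x).const_sub N).log hxN
  have hl2 : HasDerivAt (fun t => log (t + 1)) (1 / (x + 1)) x := by
    simpa using ((hasDerivAt_id x).add_const 1).log hx
  exact (((hlin.add hl1).sub hl2).sub_const (log N)).congr_deriv (by ring)

theorem strictConvexOn_criticalLog :
    StrictConvexOn ℝ (Ioc (-1) ((N - 1) / 2)) (criticalLog N) := by
  have hderiv : ∀ t ∈ Ioc (-1) ((N - 1) / 2),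
      HasDerivAt (criticalLog N) (2 / (N - 1) * log N - 1 / (N - t) - 1 / (t + 1)) t :=
    fun t ⟨ht1, ht2⟩ => hasDerivAt_criticalLog (by linarith) (by linarith)
  refine StrictMonoOn.strictConvexOn_of_deriv (convex_Ioc _ _)
    (fun t ht => (hderiv t ht).continuousAt.continuousWithinAt) ?_
  rw [interior_Ioc]
  intro a ⟨ha1, ha2⟩ b ⟨hb1, hb2⟩ hab
  rw [(hderiv a ⟨ha1, ha2.le⟩).deriv, (hderiv b ⟨hb1, hb2.le⟩).deriv]
  -- `1 / (N - t) + 1 / (t + 1) = (N + 1) / ((N - t) (t + 1))`, and the denominator increases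
  -- on `(-1, (N - 1) / 2)`
  have key : 1 / (N - b) + 1 / (b + 1) < 1 / (N - a) + 1 / (a + 1) := by
    rw [div_add_div _ _ (by linarith) (by linarith), div_add_div _ _ (by linarith) (by linarith),
      div_lt_div_iff₀ (by nlinarith) (by nlinarith)]
    nlinarith [mul_pos (sub_pos.2 hab) (by linarith : 0 < N - 1 - a - b)]
  linarith

theorem criticalLog_neg_of_lt_midpoint_of_one_neg (hN : N ≠ 1) (h1 : criticalLog N 1 < 0)
    (hx : 1 ≤ x) (hxm : x < (N - 1) / 2) : criticalLog N x < 0 := by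
  rcases hx.eq_or_lt with rfl | hx
  · exact h1
  have hseg : x ∈ openSegment ℝ 1 ((N - 1) / 2) := by
    rw [openSegment_eq_Ioo (by linarith)]; exact ⟨hx, hxm⟩
  have := strictConvexOn_criticalLog.lt_on_openSegment ⟨by norm_num, by linarith⟩
    ⟨by linarith, le_rfl⟩ (by linarith) hseg
  rwa [criticalLog_midpoint hN, max_eq_right h1.le] at this

end

theorem Nat.sq_le_two_pow_pred {n : ℕ} (hn : 7 ≤ n) : n ^ 2 ≤ 2 ^ (n - 1) := by
  induction n, hn using Nat.le_induction with
  | base => norm_num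
  | succ n hn ih =>
    have h2 : 2 ^ n = 2 * 2 ^ (n - 1) := by
      rw [← pow_succ']; congr 1; omega
    rw [Nat.add_sub_cancel, h2]
    nlinarith

theorem sq_lt_two_mul_div_pred_pow {n : ℕ} (hn : 4 ≤ n) :
    (n : ℝ) ^ 2 < (2 * n / (n - 1)) ^ (n - 1) := by
  rcases lt_or_ge n 7 with h7 | h7
  · interval_cases n <;> norm_num
  have hN : (7 : ℝ) ≤ n := by exact_mod_cast h7
  calc (n : ℝ) ^ 2 ≤ 2 ^ (n - 1) := by exact_mod_cast Nat.sq_le_two_pow_pred h7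
    _ < (2 * n / (n - 1)) ^ (n - 1) :=
      pow_lt_pow_left₀ (by rw [lt_div_iff₀ (by linarith)]; linarith) (by norm_num) (by omega)

theorem criticalLog_one_neg {n : ℕ} (hn : 4 ≤ n) : criticalLog n 1 < 0 := by
  have hN : (4 : ℝ) ≤ n := by exact_mod_cast hn
  have key := log_lt_log (by positivity) (sq_lt_two_mul_div_pred_pow hn)
  rw [log_pow, log_pow, Nat.cast_pred (by omega), log_div (by positivity) (by linarith),
    log_mul two_ne_zero (by positivity)] at key
  have : 2 * log n / (n - 1) < log 2 + log n - log (n - 1) := by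
    rw [div_lt_iff₀ (by linarith)]; push_cast at key; linarith
  have hlin : 2 * 1 / ((n : ℝ) - 1) * log n = 2 * log n / (n - 1) := by ring
  rw [criticalLog, hlin, one_add_one_eq_two]
  linarith

theorem criticalLog_eq_zero_iff {n : ℕ} {x : ℝ} (hx : x ∈ Icc 1 ((n : ℝ) - 2)) :
    criticalLog n x = 0 ↔ x = (n - 1) / 2 := by
  obtain ⟨hx1, hx2⟩ := hx
  have hN : (n : ℝ) ≠ 1 := by intro h; linarith
  have hneg : ∀ y : ℝ, 1 ≤ y → y < (n - 1) / 2 → criticalLog n y < 0 := fun y hy hym =>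
    have hn : 3 < n := by exact_mod_cast (by linarith : (3 : ℝ) < n)
    criticalLog_neg_of_lt_midpoint_of_one_neg hN (criticalLog_one_neg hn) hy hym
  refine ⟨fun h => ?_, fun h => h ▸ criticalLog_midpoint hN⟩
  rcases lt_trichotomy x ((n - 1) / 2) with hlt | heq | hgt
  · exact absurd h (hneg x hx1 hlt).ne
  · exact heq
  · have := hneg (n - 1 - x) (by linarith) (by linarith)
    rw [criticalLog_sub_one_sub hN, h] at this
    simp at this

/-- For every integer `n ≥ 3`, the set of `x ∈ [1, n-2]` with
`n^{2x/(n-1)}(n - x) - n(x + 1) = 0` is exactly `{(n-1)/2}`. -/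
theorem critical_equation_solution_set (n : ℕ) (hn : 3 ≤ n) :
    {x : ℝ | x ∈ Set.Icc (1 : ℝ) ((n : ℝ) - 2) ∧
        (n : ℝ) ^ (2 * x / ((n : ℝ) - 1)) * ((n : ℝ) - x) - (n : ℝ) * (x + 1) = 0}
      = {((n : ℝ) - 1) / 2} := by
  have hN : (3 : ℝ) ≤ n := by exact_mod_cast hn
  have hmid : ((n : ℝ) - 1) / 2 ∈ Icc (1 : ℝ) ((n : ℝ) - 2) := ⟨by linarith, by linarith⟩
  ext x
  simp only [mem_ofPred_eq, mem_singleton_iff]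
  refine ⟨fun ⟨hx, heq⟩ => ?_, fun hx => ⟨hx ▸ hmid, ?_⟩⟩
  · rw [criticalEquation_iff_criticalLog_eq_zero (by linarith) (by linarith [hx.2])
      (by linarith [hx.1])] at heq
    exact (criticalLog_eq_zero_iff hx).1 heq
  · subst hx
    rw [criticalEquation_iff_criticalLog_eq_zero (by linarith) (by linarith) (by linarith)]
    exact criticalLog_midpoint (by linarith)
end

section
/- If p is a 0-maximal polynomial of degree n ≥ 2, then d(p) = |p|_0, i.e., the directed Hausdorff distance from the zero set of p to the zero set of p' equals the distance from the origin to the nearest critical point of p. -/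
/-!
Comparing with `X ^ n - X`, whose critical points all have modulus `n ^ (-1/(n-1))`, maximality
gives `|p|_0 ^ (n-1) ≥ 1/n`. On the other hand `p'(0)` is, up to sign, the product of the nonzero
zeros of `p`, so the product of the moduli of the `n - 1` critical points is `|p'(0)| / n ≤ 1/n`.
Hence every critical point of `p` has modulus exactly `|p|_0`.

It remains to find, for every zero `a ≠ 0` of `p`, a critical point `w` with `|a - w| ≤ |w|`, i.e.
with `re (w / a) ≥ 1/2` (the zero `a = 0` is at distance exactly `|p|_0`). After rescaling, `a = 1`,
and then `∫₀¹ p' = p(1) - p(0) = 0` says that `p'` is apolar to `∫₀¹ (X - t) ^ (n-1) dt`, whose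
zeros lie on the line `re = 1/2`. Grace's theorem, proved for half-planes by induction using
Laguerre's theorem on polar derivatives, then puts a zero of `p'` in `re ≥ 1/2`.
-/
open Polynomial

/-- `S(n,0)`: monic complex polynomials of degree `n` with all zeros in the closed unit disk
and vanishing at `0`. -/
def S0 (n : ℕ) : Set (Polynomial ℂ) :=
  {p | p.Monic ∧ p.natDegree = n ∧ (∀ z : ℂ, p.eval z = 0 → ‖z‖ ≤ 1) ∧
    p.eval 0 = 0}

/-- `|p|_0 = min {|w| : p'(w) = 0}`: the distance from the origin to the zero set of `p'`. -/
noncomputable def pnorm0 (p : Polynomial ℂ) : ℝ :=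
  sInf ((fun w : ℂ => ‖w‖) '' {w : ℂ | (Polynomial.derivative p).eval w = 0})

/-- `d(p) = max_{p(z)=0} min_{p'(w)=0} |z - w|`, the directed Hausdorff distance from the
zeros of `p` to the zeros of `p'`. -/
noncomputable def dfun (p : Polynomial ℂ) : ℝ :=
  sSup ((fun z => sInf ((fun w => ‖z - w‖) ''
      {w : ℂ | (Polynomial.derivative p).eval w = 0})) '' {z : ℂ | p.eval z = 0})

open Metric

namespace Complex

lemma norm_two_mul_sub_le_norm_iff {δ : ℝ} (hδ : 0 < δ) {s : ℂ} :
    ‖2 * (δ : ℂ) - s‖ ≤ ‖s‖ ↔ δ ≤ s.re := by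
  rw [← sq_le_sq₀ (norm_nonneg _) (norm_nonneg _), Complex.sq_norm, Complex.sq_norm,
    normSq_apply, normSq_apply]
  simp only [sub_re, sub_im, mul_re, mul_im, ofReal_re, ofReal_im, re_ofNat, im_ofNat]
  constructor <;> intro h <;> nlinarith

lemma inv_mem_closedBall_iff {δ : ℝ} (hδ : 0 < δ) {s : ℂ} (hs : s ≠ 0) :
    s⁻¹ ∈ closedBall (2 * (δ : ℂ))⁻¹ (2 * δ)⁻¹ ↔ δ ≤ s.re := by
  have h2δ : 2 * (δ : ℂ) ≠ 0 := by exact_mod_cast (by positivity : 2 * δ ≠ 0)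
  have hnorm : ‖2 * (δ : ℂ)‖ = 2 * δ := by
    rw [norm_mul, norm_real, Real.norm_of_nonneg hδ.le, Complex.norm_two]
  rw [mem_closedBall, dist_eq_norm, inv_sub_inv hs h2δ, norm_div, norm_mul, hnorm,
    div_le_iff₀ (by positivity), ← norm_two_mul_sub_le_norm_iff hδ]
  field_simp

end Complex

lemma Multiset.sum_map_mem_closedBall {ι E : Type*} [SeminormedAddCommGroup E] {s : Multiset ι}
    {f : ι → E} {c : E} {r : ℝ} (h : ∀ i ∈ s, f i ∈ closedBall c r) :
    (s.map f).sum ∈ closedBall (card s • c) (card s * r) := by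
  rw [mem_closedBall, dist_eq_norm, ← Multiset.sum_replicate, ← Multiset.map_const',
    ← Multiset.sum_map_sub, ← nsmul_eq_mul]
  refine (norm_multiset_sum_le _).trans ?_
  rw [Multiset.map_map, ← Multiset.card_map (fun i => ‖f i - c‖)]
  refine Multiset.sum_le_card_nsmul _ _ fun x hx => ?_
  obtain ⟨i, hi, rfl⟩ := Multiset.mem_map.1 hx
  exact mem_closedBall_iff_norm.1 (h i hi)

lemma Multiset.exists_lt_forall_le {α : Type*} {s : Multiset α} {f : α → ℝ} {b : ℝ}
    (h : ∀ a ∈ s, f a < b) : ∃ c < b, ∀ a ∈ s, f a ≤ c := by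
  rcases eq_or_ne s 0 with rfl | hs
  · exact ⟨b - 1, by linarith, by simp⟩
  obtain ⟨a₀, ha₀, hmax⟩ := s.exists_max_image f hs
  exact ⟨f a₀, h a₀ ha₀, hmax⟩

lemma Multiset.forall_eq_of_prod_le_pow_card {s : Multiset ℝ} {r : ℝ} (hr : 0 < r)
    (h : ∀ x ∈ s, r ≤ x) (hprod : s.prod ≤ r ^ card s) : ∀ x ∈ s, x = r := by
  intro x hx
  obtain ⟨t, rfl⟩ := Multiset.exists_cons_of_mem hx
  have ht : r ^ card t ≤ t.prod := by
    simpa using Multiset.prod_map_le_prod_map₀ (fun _ => r) id (fun _ _ => hr.le)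
      (fun y hy => h y (Multiset.mem_cons_of_mem hy))
  rw [Multiset.prod_cons, Multiset.card_cons, pow_succ'] at hprod
  have : x * r ^ card t ≤ r * r ^ card t :=
    (mul_le_mul_of_nonneg_left ht (hr.le.trans (h x hx))).trans hprod
  exact le_antisymm (le_of_mul_le_mul_right this (pow_pos hr _)) (h x hx)

lemma Multiset.norm_prod {α : Type*} [NormedField α] (s : Multiset α) :
    ‖s.prod‖ = (s.map (‖·‖)).prod :=
  map_multiset_prod normHom s

namespace Polynomial

section CommRing

variable {R : Type*} [CommRing R]

/-- `A` is treated as a form of degree `N`. -/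
noncomputable def polarDeriv (N : ℕ) (ζ : R) (A : R[X]) : R[X] :=
  C (N : R) * A + (C ζ - X) * derivative A

lemma coeff_polarDeriv (N : ℕ) (ζ : R) (A : R[X]) (k : ℕ) :
    (polarDeriv N ζ A).coeff k = ((N : R) - k) * A.coeff k + ζ * (k + 1) * A.coeff (k + 1) := by
  rw [polarDeriv, coeff_add, coeff_C_mul, sub_mul, coeff_sub, coeff_C_mul]
  rcases k with _ | k
  · simp [coeff_derivative, mul_coeff_zero]
  · rw [coeff_X_mul, coeff_derivative, coeff_derivative]
    push_cast
    ring

lemma natDegree_polarDeriv_le {N : ℕ} {A : R[X]} (hA : A.natDegree ≤ N + 1) (ζ : R) :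
    (polarDeriv (N + 1) ζ A).natDegree ≤ N := by
  rw [natDegree_le_iff_coeff_eq_zero]
  intro m hm
  rw [coeff_polarDeriv, coeff_eq_zero_of_natDegree_lt (by omega : A.natDegree < m + 1)]
  rcases (show N + 1 ≤ m by omega).eq_or_lt with rfl | hlt
  · simp
  · simp [coeff_eq_zero_of_natDegree_lt (hA.trans_lt hlt)]

/-- The apolarity pairing of two forms of degree `N`, scaled by `N!` to avoid division. -/
def apolar (N : ℕ) (A B : R[X]) : R :=
  ∑ k ∈ Finset.range (N + 1),
    (-1) ^ k * (k.factorial : R) * ((N - k).factorial : R) * A.coeff k * B.coeff (N - k)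

lemma apolar_sum_right {ι : Type*} (N : ℕ) (A : R[X]) (s : Finset ι) (B : ι → R[X]) :
    apolar N A (∑ i ∈ s, B i) = ∑ i ∈ s, apolar N A (B i) := by
  simp only [apolar, finsetSum_coeff, Finset.mul_sum]
  exact Finset.sum_comm

lemma apolar_sub_right (N : ℕ) (A B₁ B₂ : R[X]) :
    apolar N A (B₁ - B₂) = apolar N A B₁ - apolar N A B₂ := by
  simp only [apolar, coeff_sub, mul_sub, Finset.sum_sub_distrib]

lemma apolar_monomial_right {N m : ℕ} (hm : m ≤ N) (A : R[X]) (b : R) :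
    apolar N A (monomial m b) =
      (-1) ^ (N - m) * ((N - m).factorial : R) * (m.factorial : R) * A.coeff (N - m) * b := by
  rw [apolar, Finset.sum_eq_single (N - m)]
  · rw [coeff_monomial, Nat.sub_sub_self hm, if_pos rfl]
  · intro k hk hne
    rw [coeff_monomial, if_neg (by rw [Finset.mem_range] at hk; omega), mul_zero]
  · intro h
    exact absurd (Finset.mem_range.2 (by omega)) h

lemma apolar_C_right (N : ℕ) (A : R[X]) (b : R) :
    apolar N A (C b) = (-1) ^ N * (N.factorial : R) * A.coeff N * b := by
  rw [← monomial_zero_left, apolar_monomial_right (Nat.zero_le N)]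
  simp

lemma apolar_polarDeriv_monomial {N m : ℕ} (hm : m ≤ N) (ζ b : R) (A : R[X]) :
    apolar N (polarDeriv (N + 1) ζ A) (monomial m b) =
      apolar (N + 1) A ((X - C ζ) * monomial m b) := by
  obtain ⟨k, rfl⟩ := Nat.exists_eq_add_of_le hm
  rw [sub_mul, X_mul_monomial, C_mul_monomial, apolar_sub_right,
    apolar_monomial_right (by omega), apolar_monomial_right (by omega),
    apolar_monomial_right (by omega), coeff_polarDeriv,
    show m + k + 1 - (m + 1) = k by omega, show m + k + 1 - m = k + 1 by omega,
    show m + k - m = k by omega, Nat.factorial_succ, Nat.factorial_succ]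
  push_cast
  ring

lemma apolar_polarDeriv {N : ℕ} {B : R[X]} (hB : B.natDegree ≤ N) (ζ : R) (A : R[X]) :
    apolar N (polarDeriv (N + 1) ζ A) B = apolar (N + 1) A ((X - C ζ) * B) := by
  conv_lhs => rw [B.as_sum_range' (N + 1) (Nat.lt_succ_of_le hB)]
  conv_rhs => rw [B.as_sum_range' (N + 1) (Nat.lt_succ_of_le hB)]
  rw [Finset.mul_sum, apolar_sum_right, apolar_sum_right]
  exact Finset.sum_congr rfl fun m hm =>
    apolar_polarDeriv_monomial (Nat.lt_succ_iff.1 (Finset.mem_range.1 hm)) ζ _ A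

end CommRing

/-- Laguerre's theorem for a half-plane. -/
theorem eval_polarDeriv_ne_zero {N : ℕ} {A : ℂ[X]} (hA : A.natDegree = N + 1) {c : ℝ}
    (hroots : ∀ w ∈ A.roots, w.re ≤ c) {ζ z : ℂ} (hζ : c < ζ.re) (hz : c < z.re) :
    (polarDeriv (N + 1) ζ A).eval z ≠ 0 := by
  have hA0 : A ≠ 0 := ne_zero_of_natDegree_gt (n := 0) (by omega)
  have hAz : A.eval z ≠ 0 := fun h => by linarith [hroots z ((mem_roots hA0).2 h)]
  set δ := z.re - c
  have hδ : 0 < δ := sub_pos.2 hz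
  set S := (A.roots.map fun w => 1 / (z - w)).sum
  have hS : S ∈ closedBall ((N + 1) • (2 * (δ : ℂ))⁻¹) ((N + 1 : ℕ) * (2 * δ)⁻¹) := by
    rw [← hA, ← IsAlgClosed.card_roots_eq_natDegree]
    refine Multiset.sum_map_mem_closedBall fun w hw => ?_
    have hzw : z - w ≠ 0 := sub_ne_zero.2 fun h => by linarith [hroots w hw, h ▸ hz]
    rw [one_div, Complex.inv_mem_closedBall_iff hδ hzw, Complex.sub_re]
    linarith [hroots w hw]
  intro h
  rw [polarDeriv, eval_add, eval_mul, eval_mul, eval_sub, eval_C, eval_C, eval_X,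
    (IsAlgClosed.splits A).eval_derivative_eq_eval_mul_sum hAz] at h
  -- the vanishing of the polar derivative says `(N + 1) / (z - ζ) = S`
  have hNS : ((N + 1 : ℕ) : ℂ) = (z - ζ) * S :=
    mul_left_cancel₀ hAz (by linear_combination h)
  have ht : z - ζ ≠ 0 := fun h0 => by
    rw [h0, zero_mul] at hNS; exact Nat.cast_ne_zero.2 N.succ_ne_zero hNS
  have hmem : (z - ζ)⁻¹ ∈ closedBall (2 * (δ : ℂ))⁻¹ (2 * δ)⁻¹ := by
    rw [mem_closedBall, dist_eq_norm] at hS ⊢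
    rw [show S = ((N + 1 : ℕ) : ℂ) * (z - ζ)⁻¹ by
      rw [hNS, mul_comm (z - ζ), mul_assoc, mul_inv_cancel₀ ht, mul_one], nsmul_eq_mul, ← mul_sub,
      norm_mul, Complex.norm_natCast] at hS
    exact le_of_mul_le_mul_left hS (by positivity)
  rw [Complex.inv_mem_closedBall_iff hδ ht, Complex.sub_re] at hmem
  linarith

lemma coeff_polarDeriv_natDegree {N : ℕ} {A : ℂ[X]} (hA : A.natDegree = N + 1) (ζ : ℂ) :
    (polarDeriv (N + 1) ζ A).coeff N = A.leadingCoeff * ((N + 1) * ζ - A.roots.sum) := by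
  have hnext := (IsAlgClosed.splits A).nextCoeff_eq_neg_sum_roots_mul_leadingCoeff
  rw [nextCoeff_of_natDegree_pos (by omega), hA, Nat.add_sub_cancel] at hnext
  have hlead : A.coeff (N + 1) = A.leadingCoeff := by rw [leadingCoeff, hA]
  rw [coeff_polarDeriv, hnext, hlead]
  push_cast
  ring

lemma coeff_polarDeriv_ne_zero {N : ℕ} {A : ℂ[X]} (hA : A.natDegree = N + 1) {c : ℝ}
    (hroots : ∀ w ∈ A.roots, w.re ≤ c) {ζ : ℂ} (hζ : c < ζ.re) :
    (polarDeriv (N + 1) ζ A).coeff N ≠ 0 := by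
  have hA0 : A ≠ 0 := ne_zero_of_natDegree_gt (n := 0) (by omega)
  have hsum : A.roots.sum.re ≤ (N + 1) * c := by
    calc A.roots.sum.re = (A.roots.map Complex.re).sum :=
          Complex.reAddGroupHom.map_multiset_sum _
      _ ≤ (A.roots.map Complex.re).card • c :=
          Multiset.sum_le_card_nsmul _ _ (Multiset.forall_mem_map_iff.2 hroots)
      _ = (N + 1) * c := by
          rw [Multiset.card_map, IsAlgClosed.card_roots_eq_natDegree, hA, nsmul_eq_mul]
          push_cast; ring
  rw [coeff_polarDeriv_natDegree hA]
  refine mul_ne_zero (leadingCoeff_ne_zero.2 hA0) fun h => ?_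
  have hre := congrArg Complex.re (sub_eq_zero.1 h)
  rw [show ((N : ℂ) + 1) * ζ = ((N + 1 : ℝ) : ℂ) * ζ by push_cast; ring,
    Complex.re_ofReal_mul] at hre
  nlinarith

lemma apolar_ne_zero_of_natDegree_eq_zero {N : ℕ} {A B : ℂ[X]} (hA : A.natDegree = N)
    (hA0 : A ≠ 0) (hB0 : B ≠ 0) (hB : B.natDegree = 0) : apolar N A B ≠ 0 := by
  have hb : B.coeff 0 ≠ 0 := fun h => hB0 (by rw [eq_C_of_natDegree_eq_zero hB, h, C_0])
  have hfact : (A.natDegree.factorial : ℂ) ≠ 0 := Nat.cast_ne_zero.2 (Nat.factorial_ne_zero _)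
  rw [eq_C_of_natDegree_eq_zero hB, apolar_C_right, ← hA, coeff_natDegree]
  exact mul_ne_zero (mul_ne_zero (mul_ne_zero (by simp) hfact) (leadingCoeff_ne_zero.2 hA0)) hb

/-- Grace's theorem for a half-plane. -/
theorem apolar_ne_zero {N : ℕ} {A B : ℂ[X]} (hA : A.natDegree = N) (hA0 : A ≠ 0) {c : ℝ}
    (hAroots : ∀ w ∈ A.roots, w.re ≤ c) (hB : B.natDegree ≤ N) (hB0 : B ≠ 0)
    (hBroots : ∀ z ∈ B.roots, c < z.re) : apolar N A B ≠ 0 := by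
  induction N generalizing A B with
  | zero => exact apolar_ne_zero_of_natDegree_eq_zero hA hA0 hB0 (Nat.le_zero.1 hB)
  | succ N ih =>
    rcases Nat.eq_zero_or_pos B.natDegree with hB' | hB'
    · exact apolar_ne_zero_of_natDegree_eq_zero hA hA0 hB0 hB'
    obtain ⟨ζ, hζ⟩ := IsAlgClosed.exists_root B (natDegree_pos_iff_degree_pos.1 hB').ne'
    obtain ⟨B₁, rfl⟩ := dvd_iff_isRoot.2 hζ
    have hB₁0 : B₁ ≠ 0 := right_ne_zero_of_mul hB0
    rw [natDegree_mul (X_sub_C_ne_zero ζ) hB₁0, natDegree_X_sub_C] at hB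
    have hζc : c < ζ.re := hBroots ζ ((mem_roots hB0).2 hζ)
    have hcoeff := coeff_polarDeriv_ne_zero hA hAroots hζc
    have hP0 : polarDeriv (N + 1) ζ A ≠ 0 := fun h => hcoeff (by rw [h, coeff_zero])
    have hPdeg : (polarDeriv (N + 1) ζ A).natDegree = N :=
      (natDegree_polarDeriv_le hA.le ζ).antisymm (le_natDegree_of_ne_zero hcoeff)
    rw [← apolar_polarDeriv (by omega)]
    refine ih hPdeg hP0 (fun w hw => ?_) (by omega) hB₁0 (fun z hz => ?_)
    · by_contra! hw'
      exact eval_polarDeriv_ne_zero hA hAroots hζc hw' ((mem_roots hP0).1 hw)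
    · exact hBroots z (by rw [roots_mul hB0]; exact Multiset.mem_add.2 (Or.inr hz))

section Field

variable {K : Type*} [Field K]

/-- `∫₀¹ (X - t) ^ N dt`, so that pairing with it integrates over `[0, 1]`. -/
noncomputable def integralKernel (N : ℕ) : K[X] :=
  C ((N : K) + 1)⁻¹ * (X ^ (N + 1) - (X - 1) ^ (N + 1))

lemma coeff_integralKernel {N k : ℕ} (hk : k ≤ N) :
    (integralKernel N : K[X]).coeff k =
      ((N : K) + 1)⁻¹ * ((-1) ^ (N - k) * ((N + 1).choose k : K)) := by
  rw [integralKernel, coeff_C_mul, coeff_sub, coeff_X_pow, if_neg (by omega), sub_eq_add_neg X,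
    ← C_1, ← C_neg, coeff_X_add_C_pow, show N + 1 - k = N - k + 1 by omega, pow_succ]
  ring

lemma natDegree_integralKernel_le (N : ℕ) : (integralKernel N : K[X]).natDegree ≤ N := by
  rw [natDegree_le_iff_coeff_eq_zero]
  intro m hm
  rw [integralKernel, coeff_C_mul, coeff_sub, sub_eq_add_neg X, ← C_1, ← C_neg,
    coeff_X_add_C_pow, coeff_X_pow]
  rcases (show N + 1 ≤ m by omega).eq_or_lt with rfl | hlt
  · simp
  · simp [hlt.ne', Nat.choose_eq_zero_of_lt hlt]

variable [CharZero K]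

lemma integralKernel_ne_zero (N : ℕ) : (integralKernel N : K[X]) ≠ 0 := by
  intro h
  have := congrArg (coeff · N) h
  simp only [coeff_integralKernel le_rfl, Nat.sub_self, pow_zero, one_mul,
    Nat.choose_succ_self_right, coeff_zero] at this
  push_cast at this
  field_simp at this
  exact one_ne_zero this

lemma apolar_derivative_integralKernel {N : ℕ} {p : K[X]} (hp : p.natDegree ≤ N + 1) :
    apolar N (derivative p) (integralKernel N) = N.factorial * (p.eval 1 - p.eval 0) := by
  have hterm : ∀ k ∈ Finset.range (N + 1), (-1) ^ k * (k.factorial : K) * ((N - k).factorial : K) *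
      (derivative p).coeff k * (integralKernel N).coeff (N - k) =
        N.factorial * p.coeff (k + 1) := by
    intro k hk
    have hk : k ≤ N := Nat.lt_succ_iff.1 (Finset.mem_range.1 hk)
    have hchoose : ((N + 1).choose (N - k) : K) * ((N - k).factorial : K) *
        (((k : K) + 1) * k.factorial) = ((N : K) + 1) * N.factorial := by
      have := Nat.choose_mul_factorial_mul_factorial (show N - k ≤ N + 1 by omega)
      rw [show N + 1 - (N - k) = k + 1 by omega, Nat.factorial_succ, Nat.factorial_succ] at this
      exact_mod_cast this
    have hsign : ((-1 : K) ^ k) * (-1) ^ k = 1 := by rw [← mul_pow]; norm_num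
    rw [coeff_derivative, coeff_integralKernel (Nat.sub_le N k), Nat.sub_sub_self hk]
    have hN : (N : K) + 1 ≠ 0 := Nat.cast_add_one_ne_zero N
    field_simp
    linear_combination (p.coeff (k + 1)) * hchoose + (k.factorial * (N - k).factorial *
      p.coeff (k + 1) * ((N + 1).choose (N - k) : K) * ((k : K) + 1)) * hsign
  rw [apolar, Finset.sum_congr rfl hterm, ← Finset.mul_sum, eval_eq_sum_range' (n := N + 2)
    (by omega), Finset.sum_range_succ' (fun i => p.coeff i * 1 ^ i), ← coeff_zero_eq_eval_zero]
  simp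

end Field

lemma one_half_le_re_of_isRoot_integralKernel {N : ℕ} {z : ℂ}
    (hz : (integralKernel N : ℂ[X]).IsRoot z) : 1 / 2 ≤ z.re := by
  rw [IsRoot, integralKernel, eval_mul, eval_C, mul_eq_zero, inv_eq_zero, eval_sub, sub_eq_zero,
    eval_pow, eval_pow, eval_sub, eval_X, eval_one] at hz
  have hnorm : ‖z‖ = ‖z - 1‖ := by
    refine (pow_left_inj₀ (norm_nonneg _) (norm_nonneg _) N.succ_ne_zero).1 ?_
    rw [← norm_pow, ← norm_pow, hz.resolve_left (Nat.cast_add_one_ne_zero N)]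
  rw [← Complex.norm_two_mul_sub_le_norm_iff one_half_pos]
  norm_num
  rw [norm_sub_rev, hnorm]

/-- The integral of `p'` over `[0, 1]` vanishes; by Grace's theorem against `integralKernel`,
`p'` cannot have all its zeros in the half-plane `re < 1/2`. -/
theorem exists_eval_derivative_eq_zero_one_half_le_re {p : ℂ[X]} (h0 : p.eval 0 = 0)
    (h1 : p.eval 1 = 0) : ∃ w, (derivative p).eval w = 0 ∧ 1 / 2 ≤ w.re := by
  by_contra! hcrit
  have hA0 : derivative p ≠ 0 := fun h => by
    have := hcrit 1 (by rw [h, eval_zero]); norm_num at this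
  obtain ⟨c, hc, hroots⟩ := Multiset.exists_lt_forall_le (s := (derivative p).roots)
    fun w hw => hcrit w ((mem_roots hA0).1 hw)
  refine apolar_ne_zero rfl hA0 hroots (natDegree_integralKernel_le _)
    (integralKernel_ne_zero _) (fun z hz => hc.trans_le ?_) ?_
  · exact one_half_le_re_of_isRoot_integralKernel ((mem_roots (integralKernel_ne_zero _)).1 hz)
  · rw [apolar_derivative_integralKernel (by rw [natDegree_derivative]; omega), h0, h1, sub_self,
      mul_zero]

theorem exists_eval_derivative_eq_zero_norm_sub_le {p : ℂ[X]} (h0 : p.eval 0 = 0) {a : ℂ}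
    (ha0 : a ≠ 0) (ha : p.eval a = 0) : ∃ w, (derivative p).eval w = 0 ∧ ‖a - w‖ ≤ ‖w‖ := by
  obtain ⟨u, hu, hre⟩ := exists_eval_derivative_eq_zero_one_half_le_re
    (p := p.comp (C a * X)) (by simpa using h0) (by simpa using ha)
  refine ⟨a * u, ?_, ?_⟩
  · simpa [derivative_comp, ha0] using hu
  · have hu1 := (Complex.norm_two_mul_sub_le_norm_iff one_half_pos).2 hre
    norm_num at hu1
    rw [← mul_one_sub, norm_mul, norm_mul]
    exact mul_le_mul_of_nonneg_left hu1 (norm_nonneg a)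

end Polynomial

lemma pnorm0_nonneg (p : ℂ[X]) : 0 ≤ pnorm0 p :=
  Real.sInf_nonneg (by rintro _ ⟨w, -, rfl⟩; exact norm_nonneg w)

lemma pnorm0_le_norm {p : ℂ[X]} {w : ℂ} (hw : (derivative p).eval w = 0) : pnorm0 p ≤ ‖w‖ :=
  csInf_le ⟨0, by rintro _ ⟨w, -, rfl⟩; exact norm_nonneg w⟩ ⟨w, hw, rfl⟩

lemma X_pow_sub_X_mem_S0 {n : ℕ} (hn : 2 ≤ n) : (X ^ n - X : ℂ[X]) ∈ S0 n := by
  refine ⟨monic_X_pow_sub (by rw [degree_X]; exact_mod_cast hn), ?_, fun z hz => ?_, ?_⟩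
  · rw [natDegree_sub_eq_left_of_natDegree_lt (by simp; omega), natDegree_X_pow]
  · rw [eval_sub, eval_pow, eval_X, sub_eq_zero] at hz
    by_contra! h
    have := pow_le_pow_right₀ h.le hn
    rw [← norm_pow z n, hz] at this
    nlinarith
  · simp [zero_pow (show n ≠ 0 by omega)]

lemma pnorm0_X_pow_sub_X_pow {n : ℕ} (hn : 2 ≤ n) :
    pnorm0 (X ^ n - X : ℂ[X]) ^ (n - 1) = (n : ℝ)⁻¹ := by
  have hcrit : ∀ w, (derivative (X ^ n - X : ℂ[X])).eval w = 0 ↔ (n : ℂ) * w ^ (n - 1) = 1 := by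
    simp [sub_eq_zero, derivative_X_pow]
  have hnorm : ∀ w : ℂ, (n : ℂ) * w ^ (n - 1) = 1 → ‖w‖ ^ (n - 1) = (n : ℝ)⁻¹ := fun w hw => by
    rw [← norm_pow, eq_inv_of_mul_eq_one_right hw, norm_inv, Complex.norm_natCast]
  obtain ⟨w₀, hw₀⟩ := IsAlgClosed.exists_pow_nat_eq ((n : ℂ)⁻¹) (show 0 < n - 1 by omega)
  have hw₀' : (n : ℂ) * w₀ ^ (n - 1) = 1 := by
    rw [hw₀, mul_inv_cancel₀ (Nat.cast_ne_zero.2 (by omega))]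
  have himage : (fun w => ‖w‖) '' {w | (derivative (X ^ n - X : ℂ[X])).eval w = 0} = {‖w₀‖} := by
    refine Set.eq_singleton_iff_unique_mem.2 ⟨⟨w₀, (hcrit w₀).2 hw₀', rfl⟩, ?_⟩
    rintro _ ⟨w, hw, rfl⟩
    refine (pow_left_inj₀ (norm_nonneg _) (norm_nonneg _) (show n - 1 ≠ 0 by omega)).1 ?_
    rw [hnorm w ((hcrit w).1 hw), hnorm w₀ hw₀']
  rw [pnorm0, himage, csInf_singleton, hnorm w₀ hw₀']

lemma norm_coeff_zero_le_one_of_monic {g : ℂ[X]} (hg : g.Monic)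
    (hroots : ∀ z, g.eval z = 0 → ‖z‖ ≤ 1) : ‖g.coeff 0‖ ≤ 1 := by
  rw [(IsAlgClosed.splits g).coeff_zero_eq_prod_roots_of_monic hg, norm_mul, norm_pow, norm_neg,
    norm_one, one_pow, one_mul, Multiset.norm_prod]
  simpa using Multiset.prod_map_le_prod_map₀ (‖·‖) (fun _ => (1 : ℝ))
    (fun _ _ => norm_nonneg _) fun z hz => hroots z ((mem_roots hg.ne_zero).1 hz)

lemma prod_norm_roots_derivative_le {n : ℕ} {p : ℂ[X]} (hp : p ∈ S0 n) :
    ((derivative p).roots.map (‖·‖)).prod ≤ (n : ℝ)⁻¹ := by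
  obtain ⟨hmonic, hdeg, hdisk, h0⟩ := hp
  have hn : 0 < n := Nat.pos_of_ne_zero fun hn => by
    rw [hmonic.natDegree_eq_zero.1 (hdeg.trans hn), eval_one] at h0
    exact one_ne_zero h0
  obtain ⟨g, rfl⟩ := X_dvd_iff.2 (show p.coeff 0 = 0 by rwa [coeff_zero_eq_eval_zero])
  have hcoeff : ‖(derivative (X * g)).coeff 0‖ ≤ 1 := by
    rw [show (derivative (X * g)).coeff 0 = g.coeff 0 by simp [coeff_derivative]]
    exact norm_coeff_zero_le_one_of_monic (monic_X.of_mul_monic_left hmonic)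
      fun z hz => hdisk z (by rw [eval_mul, hz, mul_zero])
  rw [(IsAlgClosed.splits _).coeff_zero_eq_leadingCoeff_mul_prod_roots, leadingCoeff_derivative,
    hmonic.leadingCoeff, hdeg, norm_mul, norm_mul, norm_pow, norm_neg, norm_one, one_pow, one_mul,
    one_mul, Complex.norm_natCast, Multiset.norm_prod] at hcoeff
  rw [← one_div, le_div_iff₀ (by exact_mod_cast hn)]
  simpa [mul_comm] using hcoeff

lemma norm_eq_pnorm0_of_zero_maximal {n : ℕ} (hn : 2 ≤ n) {p : ℂ[X]} (hp : p ∈ S0 n)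
    (hmax : ∀ q ∈ S0 n, pnorm0 q ≤ pnorm0 p) {w : ℂ} (hw : (derivative p).eval w = 0) :
    ‖w‖ = pnorm0 p := by
  have hr : (n : ℝ)⁻¹ ≤ pnorm0 p ^ (n - 1) := by
    rw [← pnorm0_X_pow_sub_X_pow hn]
    exact pow_le_pow_left₀ (pnorm0_nonneg _) (hmax _ (X_pow_sub_X_mem_S0 hn)) _
  have hr0 : 0 < pnorm0 p := lt_of_pow_lt_pow_left₀ (n - 1) (pnorm0_nonneg p) <| by
    rw [zero_pow (by omega)]
    exact (inv_pos.2 (by positivity)).trans_le hr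
  have hdeg : (derivative p).natDegree = n - 1 := by rw [natDegree_derivative, hp.2.1]
  have hdp0 : derivative p ≠ 0 := ne_zero_of_natDegree_gt (n := 0) (by omega)
  refine Multiset.forall_eq_of_prod_le_pow_card hr0
    (Multiset.forall_mem_map_iff.2 fun w hw => pnorm0_le_norm ((mem_roots hdp0).1 hw)) ?_ _
    (Multiset.mem_map_of_mem _ ((mem_roots hdp0).2 hw))
  rw [Multiset.card_map, IsAlgClosed.card_roots_eq_natDegree, hdeg]
  exact (prod_norm_roots_derivative_le hp).trans hr

lemma dfun_eq_pnorm0_of_forall_norm_eq {p : ℂ[X]} (h0 : p.eval 0 = 0)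
    (hcrit : ∀ w, (derivative p).eval w = 0 → ‖w‖ = pnorm0 p) : dfun p = pnorm0 p := by
  have hbdd : ∀ z, BddBelow ((fun w => ‖z - w‖) '' {w | (derivative p).eval w = 0}) :=
    fun z => ⟨0, by rintro _ ⟨w, -, rfl⟩; exact norm_nonneg _⟩
  have hzero : sInf ((fun w => ‖0 - w‖) '' {w | (derivative p).eval w = 0}) = pnorm0 p := by
    simp only [zero_sub, norm_neg]; rfl
  refine IsGreatest.csSup_eq ⟨⟨0, h0, hzero⟩, ?_⟩
  rintro _ ⟨z, hz, rfl⟩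
  rcases eq_or_ne z 0 with rfl | hz0
  · exact hzero.le
  obtain ⟨w, hw, hdist⟩ := exists_eval_derivative_eq_zero_norm_sub_le h0 hz0 hz
  exact csInf_le_of_le (hbdd z) ⟨w, hw, rfl⟩ (hdist.trans (hcrit w hw).le)

/-- Every 0-maximal polynomial `p` of degree `n ≥ 2` satisfies `d(p) = |p|_0`. -/
theorem dfun_eq_pnorm0_of_zero_maximal (n : ℕ) (hn : 2 ≤ n)
    (p : Polynomial ℂ) (hp : p ∈ S0 n)
    (hmax : ∀ q ∈ S0 n, pnorm0 q ≤ pnorm0 p) :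
    dfun p = pnorm0 p :=
  dfun_eq_pnorm0_of_forall_norm_eq hp.2.2.2 fun _ => norm_eq_pnorm0_of_zero_maximal hn hp hmax
end

section
/- Let M and N be nonempty finite sets of complex numbers such that M is contained in the closed convex hull of N. Then max_{w ∈ M} min_{z ∈ N} |w − z| ≤ max_{z ∈ N} |z|, and equality holds if and only if 0 ∈ M and min_{z ∈ N} |z| = max_{z ∈ N} |z|. -/
/-!
Write `w = ∑ λ_z z` as a convex combination of points of `N`. Then `‖w‖² = ∑ λ_z ⟪w, z⟫`, so some
`z ∈ N` has `⟪w, z⟫ ≥ ‖w‖²`, which expands to `‖w - z‖² + ‖w‖² ≤ ‖z‖²`. Hence every point of `M`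
is within `max ‖z‖` of `N`, and the distance can only reach that bound at `w = 0`, where it is
`min ‖z‖`.
-/

open Finset RealInnerProductSpace

section InnerProductSpace

variable {E : Type*} [NormedAddCommGroup E] [InnerProductSpace ℝ E]

theorem exists_mem_norm_sub_sq_add_norm_sq_le_of_mem_convexHull {s : Set E} {w : E}
    (hw : w ∈ convexHull ℝ s) : ∃ z ∈ s, ‖w - z‖ ^ 2 + ‖w‖ ^ 2 ≤ ‖z‖ ^ 2 := by
  obtain ⟨z, hz, hwz : ⟪w, w⟫ ≤ ⟪w, z⟫⟩ :=
    ((innerₛₗ ℝ w).convexOn convex_univ).exists_ge_of_mem_convexHull (Set.subset_univ s) hw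
  refine ⟨z, hz, ?_⟩
  rw [norm_sub_sq_real, ← real_inner_self_eq_norm_sq, ← real_inner_self_eq_norm_sq]
  linarith

theorem Finset.inf'_norm_sub_sq_add_norm_sq_le_sup'_norm_sq {N : Finset E} (hN : N.Nonempty)
    {w : E} (hw : w ∈ convexHull ℝ (N : Set E)) :
    (N.inf' hN fun z => ‖w - z‖) ^ 2 + ‖w‖ ^ 2 ≤ (N.sup' hN fun z => ‖z‖) ^ 2 := by
  obtain ⟨z, hz, hwz⟩ := exists_mem_norm_sub_sq_add_norm_sq_le_of_mem_convexHull hw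
  have hinf : N.inf' hN (fun z => ‖w - z‖) ≤ ‖w - z‖ := inf'_le _ hz
  have hsup : ‖z‖ ≤ N.sup' hN fun z => ‖z‖ := le_sup' (fun z => ‖z‖) hz
  have hinf_nonneg : 0 ≤ N.inf' hN fun z => ‖w - z‖ := (le_inf'_iff _ _).2 fun _ _ => norm_nonneg _
  nlinarith [norm_nonneg z]

end InnerProductSpace

/-- If `M` and `N` are nonempty finite sets of complex numbers with `M` contained in the
convex hull of `N`, then `max_{w ∈ M} min_{z ∈ N} |w - z| ≤ max_{z ∈ N} |z|`, with equality
iff `0 ∈ M` and `min_{z ∈ N} |z| = max_{z ∈ N} |z|`. -/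
theorem directed_hausdorff_le_max_abs (M N : Finset ℂ)
    (hM : M.Nonempty) (hN : N.Nonempty)
    (hMN : (M : Set ℂ) ⊆ convexHull ℝ (N : Set ℂ)) :
    M.sup' hM (fun w => N.inf' hN fun z => ‖w - z‖)
        ≤ N.sup' hN (fun z => ‖z‖) ∧
      (M.sup' hM (fun w => N.inf' hN fun z => ‖w - z‖)
          = N.sup' hN (fun z => ‖z‖) ↔
        (0 : ℂ) ∈ M ∧
          N.inf' hN (fun z => ‖z‖) = N.sup' hN (fun z => ‖z‖)) := by
  set d : ℂ → ℝ := fun w => N.inf' hN fun z => ‖w - z‖ with hd_def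
  set R := N.sup' hN fun z => ‖z‖
  have hd : ∀ w ∈ M, d w ^ 2 + ‖w‖ ^ 2 ≤ R ^ 2 := fun w hw =>
    inf'_norm_sub_sq_add_norm_sq_le_sup'_norm_sq hN (hMN hw)
  have hR : 0 ≤ R := (norm_nonneg _).trans (le_sup' (fun z : ℂ => ‖z‖) hN.choose_spec)
  have hd_zero : d 0 = N.inf' hN fun z => ‖z‖ := by simp [hd_def]
  have hle : M.sup' hM d ≤ R := sup'_le _ _ fun w hw =>
    abs_le_of_sq_le_sq' (by linarith [hd w hw, sq_nonneg ‖w‖]) hR |>.2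
  refine ⟨hle, fun heq => ?_, fun ⟨h0, hinf⟩ => le_antisymm hle ?_⟩
  · obtain ⟨w, hw, hdw⟩ := exists_mem_eq_sup' hM d
    have hw0 : w = 0 := by
      have := hd w hw
      rw [← hdw, heq] at this
      simpa using this
    subst hw0
    exact ⟨hw, hd_zero ▸ hdw ▸ heq⟩
  · calc R = d 0 := by rw [hd_zero, hinf]
      _ ≤ M.sup' hM d := le_sup' d h0
end

section
/- Let p be a monic complex polynomial of degree n ≥ 2 with zeros z_1,…,z_n (listed with multiplicity). Then max_{w : p'(w)=0} min_{1≤i≤n} |w − z_i| ≤ max_{1≤i≤n} |z_i|, and equality holds if and only if z_1 + … + z_n = 0 and min_{1≤i≤n} |z_i| = max_{1≤i≤n} |z_i|. -/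
/-!
At a critical point `w` of `p = ∏ (X - zᵢ)` that is not a zero, the numbers `uᵢ = (w - zᵢ)⁻¹`
sum to zero and `zᵢ uᵢ = w uᵢ - 1`, so expanding the squares gives
`∑ |zᵢ / (w - zᵢ)|² = n + |w|² ∑ |uᵢ|²`. If every zero were at least as far from `w` as from
the origin, the left side would be at most `n`, forcing `w = 0`; this gives the inequality, and
shows that equality can only be attained at the critical point `0`, which then lies at distance
`R = maxᵢ |zᵢ|` from every zero. For zeros on the circle `|z| = R` one has
`∑ 1 / zᵢ = conj (∑ zᵢ) / R²`, so `0` is critical exactly when `∑ zᵢ = 0`.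
-/

open Polynomial Finset ComplexConjugate

theorem eval_derivative_prod_X_sub_C {K ι : Type*} [Field K] [Fintype ι] (z : ι → K) {w : K}
    (hw : ∀ i, w ≠ z i) :
    (derivative (∏ i, (X - C (z i)))).eval w = (∏ i, (w - z i)) * ∑ i, (w - z i)⁻¹ := by
  classical
  simp only [derivative_prod_finset, derivative_X_sub_C, mul_one, eval_finsetSum, eval_prod,
    eval_sub, eval_X, eval_C, mul_sum]
  refine sum_congr rfl fun i _ => ?_
  rw [← mul_prod_erase univ _ (mem_univ i), mul_comm (w - z i),
    mul_inv_cancel_right₀ (sub_ne_zero.2 (hw i))]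

theorem eval_derivative_prod_X_sub_C_eq_zero_iff {K ι : Type*} [Field K] [Fintype ι] (z : ι → K)
    {w : K} (hw : ∀ i, w ≠ z i) :
    (derivative (∏ i, (X - C (z i)))).eval w = 0 ↔ ∑ i, (w - z i)⁻¹ = 0 := by
  rw [eval_derivative_prod_X_sub_C z hw, mul_eq_zero,
    or_iff_right (prod_ne_zero_iff.2 fun i _ => sub_ne_zero.2 (hw i))]

theorem Complex.sum_norm_mul_sub_one_sq {ι : Type*} [Fintype ι] {u : ι → ℂ} (hu : ∑ i, u i = 0)
    (w : ℂ) :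
    ∑ i, ‖w * u i - 1‖ ^ 2 = ‖w‖ ^ 2 * ∑ i, ‖u i‖ ^ 2 + Fintype.card ι := by
  have hre : ∑ i, (w * u i).re = 0 := by
    rw [← Complex.re_sum, ← mul_sum, hu, mul_zero, Complex.zero_re]
  have hexpand : ∀ i, ‖w * u i - 1‖ ^ 2 = ‖w‖ ^ 2 * ‖u i‖ ^ 2 - 2 * (w * u i).re + 1 := by
    intro i
    rw [← Complex.normSq_eq_norm_sq, Complex.normSq_sub]
    simp only [Complex.normSq_eq_norm_sq, Complex.norm_mul, mul_pow, map_one, mul_one]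
    ring
  rw [sum_congr rfl fun i _ => hexpand i, sum_add_distrib, sum_sub_distrib, ← mul_sum, ← mul_sum,
    hre]
  simp

theorem Complex.sum_inv_eq_conj_sum_div {ι : Type*} [Fintype ι] {z : ι → ℂ} {R : ℝ}
    (hz : ∀ i, ‖z i‖ = R) : ∑ i, (z i)⁻¹ = conj (∑ i, z i) / (R : ℂ) ^ 2 := by
  simp only [map_sum, sum_div]
  refine sum_congr rfl fun i _ => ?_
  rw [Complex.inv_def, Complex.normSq_eq_norm_sq, hz i, div_eq_mul_inv]
  push_cast; rfl

theorem Finset.eq_sup'_of_inf'_eq_sup' {α β : Type*} [LinearOrder β] {s : Finset α}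
    (H : s.Nonempty) {f : α → β} (h : s.inf' H f = s.sup' H f) {i : α} (hi : i ∈ s) :
    f i = s.sup' H f :=
  le_antisymm (le_sup' f hi) (h ▸ inf'_le f hi)

theorem degree_derivative_prod_X_sub_C_pos {K ι : Type*} [Field K] [CharZero K] [Fintype ι]
    (z : ι → K) (hι : 2 ≤ Fintype.card ι) : 0 < (derivative (∏ i, (X - C (z i)))).degree := by
  have hdeg : (∏ i, (X - C (z i))).natDegree = Fintype.card ι := by simp
  rw [degree_derivative (by omega), hdeg]
  exact_mod_cast (by omega : 0 < Fintype.card ι - 1)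

section
variable {ι : Type*} [Fintype ι] {z : ι → ℂ}

theorem eq_zero_of_eval_derivative_eq_zero_of_norm_le_norm_sub [Nonempty ι] {w : ℂ}
    (hw : (derivative (∏ i, (X - C (z i)))).eval w = 0) (hle : ∀ i, ‖z i‖ ≤ ‖w - z i‖) :
    w = 0 := by
  by_cases hroot : ∃ i, w = z i
  · obtain ⟨i, rfl⟩ := hroot
    simpa using hle i
  simp only [not_exists] at hroot
  set u := fun i => (w - z i)⁻¹
  have hu : ∑ i, u i = 0 := (eval_derivative_prod_X_sub_C_eq_zero_iff z hroot).1 hw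
  have hterm : ∀ i, ‖w * u i - 1‖ ^ 2 ≤ 1 := by
    intro i
    have hsub : w - z i ≠ 0 := sub_ne_zero.2 (hroot i)
    have hquot : w * u i - 1 = z i / (w - z i) := by simp only [u]; field_simp; ring
    rw [hquot, norm_div, div_pow]
    exact div_le_one_of_le₀ (pow_le_pow_left₀ (norm_nonneg _) (hle i) 2) (sq_nonneg _)
  have hsum : ‖w‖ ^ 2 * ∑ i, ‖u i‖ ^ 2 ≤ 0 := by
    have hle_card := sum_le_sum fun i (_ : i ∈ univ) => hterm i
    rw [Complex.sum_norm_mul_sub_one_sq hu w] at hle_card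
    simpa using hle_card
  have hpos : 0 < ∑ i, ‖u i‖ ^ 2 :=
    sum_pos (fun i _ => by simp [u, sub_eq_zero, hroot i]) univ_nonempty
  simpa using nonpos_of_mul_nonpos_left hsum hpos

theorem eq_zero_of_eval_derivative_eq_zero_of_sup'_le_inf' (hne : (univ : Finset ι).Nonempty)
    {w : ℂ} (hw : (derivative (∏ i, (X - C (z i)))).eval w = 0)
    (hle : univ.sup' hne (fun i => ‖z i‖) ≤ univ.inf' hne fun i => ‖w - z i‖) : w = 0 :=
  have := univ_nonempty_iff.1 hne
  eq_zero_of_eval_derivative_eq_zero_of_norm_le_norm_sub hw fun i =>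
    (le_sup' _ (mem_univ i)).trans (hle.trans (inf'_le _ (mem_univ i)))

theorem inf'_norm_sub_le_sup'_norm_of_eval_derivative_eq_zero (hne : (univ : Finset ι).Nonempty)
    {w : ℂ} (hw : (derivative (∏ i, (X - C (z i)))).eval w = 0) :
    univ.inf' hne (fun i => ‖w - z i‖) ≤ univ.sup' hne fun i => ‖z i‖ := by
  by_contra! hlt
  obtain rfl := eq_zero_of_eval_derivative_eq_zero_of_sup'_le_inf' hne hw hlt.le
  simp only [zero_sub, norm_neg] at hlt
  obtain ⟨i, hi⟩ := id hne
  exact hlt.not_ge ((inf'_le _ hi).trans (le_sup' (fun i => ‖z i‖) hi))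

theorem eval_derivative_prod_X_sub_C_zero_eq_zero_iff (hι : 2 ≤ Fintype.card ι) {R : ℝ}
    (hz : ∀ i, ‖z i‖ = R) :
    (derivative (∏ i, (X - C (z i)))).eval 0 = 0 ↔ ∑ i, z i = 0 := by
  rcases eq_or_ne R 0 with rfl | hR
  · obtain rfl : z = 0 := funext fun i => norm_eq_zero.1 (hz i)
    simp [derivative_X_pow, show Fintype.card ι - 1 ≠ 0 by omega]
  have hw : ∀ i, (0 : ℂ) ≠ z i := fun i h => hR (by rw [← hz i, ← h, norm_zero])
  rw [eval_derivative_prod_X_sub_C_eq_zero_iff z hw]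
  simp only [zero_sub, inv_neg, sum_neg_distrib, neg_eq_zero, Complex.sum_inv_eq_conj_sum_div hz,
    div_eq_zero_iff, map_eq_zero, pow_eq_zero_iff two_ne_zero, Complex.ofReal_eq_zero, hR, or_false]

end

/-- For a monic polynomial `p = ∏ (X - z_i)` of degree `n ≥ 2`, the directed Hausdorff
distance from the critical points of `p` to its zeros is at most `max_i |z_i|`, with
equality iff `∑ z_i = 0` and `min_i |z_i| = max_i |z_i|`. -/
theorem critical_points_directed_hausdorff (n : ℕ) (hn : 2 ≤ n)
    (z : Fin n → ℂ) (p : Polynomial ℂ)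
    (hp : p = ∏ i, (Polynomial.X - Polynomial.C (z i))) :
    have hne : (Finset.univ : Finset (Fin n)).Nonempty :=
      ⟨⟨0, by omega⟩, Finset.mem_univ _⟩
    (sSup ((fun w => Finset.univ.inf' hne fun i => ‖w - z i‖) ''
        {w : ℂ | (Polynomial.derivative p).eval w = 0})
      ≤ Finset.univ.sup' hne fun i => ‖z i‖) ∧
    (sSup ((fun w => Finset.univ.inf' hne fun i => ‖w - z i‖) ''
        {w : ℂ | (Polynomial.derivative p).eval w = 0})
        = Finset.univ.sup' hne (fun i => ‖z i‖) ↔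
      (∑ i, z i = 0 ∧
        Finset.univ.inf' hne (fun i => ‖z i‖)
          = Finset.univ.sup' hne fun i => ‖z i‖)) := by
  intro hne
  subst hp
  set f := fun w : ℂ => univ.inf' hne fun i => ‖w - z i‖
  set crit := {w | (derivative (∏ i, (X - C (z i)))).eval w = 0}
  have hcard : 2 ≤ Fintype.card (Fin n) := by simpa using hn
  have hdeg := degree_derivative_prod_X_sub_C_pos z hcard
  have hcrit : crit.Nonempty := Complex.exists_root hdeg
  have hfin : crit.Finite := finite_setOfPred_isRoot (ne_zero_of_degree_gt hdeg)
  have hbdd : ∀ x ∈ f '' crit, x ≤ univ.sup' hne fun i => ‖z i‖ := by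
    rintro _ ⟨w, hw, rfl⟩
    exact inf'_norm_sub_le_sup'_norm_of_eval_derivative_eq_zero hne hw
  have hle := csSup_le (hcrit.image f) hbdd
  refine ⟨hle, fun heq => ?_, fun ⟨hsum, hinf⟩ => ?_⟩
  · obtain ⟨w, hw, hfw⟩ := (hcrit.image f).csSup_mem (hfin.image f)
    obtain rfl := eq_zero_of_eval_derivative_eq_zero_of_sup'_le_inf' hne hw (hfw.trans heq).ge
    have hinf : univ.inf' hne (fun i => ‖z i‖) = univ.sup' hne fun i => ‖z i‖ := by
      simpa [f] using hfw.trans heq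
    exact ⟨(eval_derivative_prod_X_sub_C_zero_eq_zero_iff hcard
      fun i => eq_sup'_of_inf'_eq_sup' hne hinf (mem_univ i)).1 hw, hinf⟩
  · have h0 : 0 ∈ crit := (eval_derivative_prod_X_sub_C_zero_eq_zero_iff hcard
      fun i => eq_sup'_of_inf'_eq_sup' hne hinf (mem_univ i)).2 hsum
    refine hle.antisymm ?_
    calc univ.sup' hne (fun i => ‖z i‖) = f 0 := by simp [f, hinf]
      _ ≤ sSup (f '' crit) := le_csSup ⟨_, hbdd⟩ ⟨0, h0, rfl⟩
end

section
/- Let p be a monic complex polynomial of degree n ≥ 2. Then there exists a normal n×n complex matrix A (i.e., A·Aᴴ = Aᴴ·A) such that det(A − z·I_n) = (−1)^n·p(z) for all z ∈ ℂ, and for every 1 ≤ i ≤ n, det(A_{[i]} − z·I_{n−1}) = ((−1)^{n−1}/n)·p'(z) for all z ∈ ℂ. -/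
open Polynomial

/-- The embedding `Fin (n-1) → Fin n` skipping the index `i`. -/
def skipIdx {n : ℕ} (i : Fin n) (j : Fin (n - 1)) : Fin n :=
  if (j : ℕ) < (i : ℕ) then ⟨(j : ℕ), by have := i.isLt; have := j.isLt; omega⟩
  else ⟨(j : ℕ) + 1, by have := j.isLt; omega⟩

/-- The degeneracy one principal submatrix `A_{[i]}` obtained by deleting the `i`-th row
and `i`-th column of `A`. -/
def subDel {n : ℕ} (A : Matrix (Fin n) (Fin n) ℂ) (i : Fin n) :
    Matrix (Fin (n - 1)) (Fin (n - 1)) ℂ :=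
  Matrix.of fun j k => A (skipIdx i j) (skipIdx i k)

/-!
Factor `p = ∏ⱼ (X - μⱼ)` and conjugate `diag μ` by the normalized discrete Fourier matrix `U`,
a unitary all of whose entries have modulus `1/√n`. Then `A = U · diag μ · Uᴴ` is normal with
characteristic polynomial `p`, and since conjugation by a unitary commutes with the adjugate,
`det (A_{[i]} - z) = adj (A - z)ᵢᵢ = ∑ⱼ |Uᵢⱼ|² ∏_{k ≠ j} (μₖ - z) = (1/n) ∑ⱼ ∏_{k ≠ j} (μₖ - z)`,
which is `(-1)^{n-1} p'(z) / n`.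
-/

open Matrix

namespace Matrix

variable {ι R : Type*} [Fintype ι] [DecidableEq ι] [CommRing R] [StarRing R]
  {U : Matrix ι ι R}

theorem isStarNormal_diagonal (d : ι → R) : IsStarNormal (diagonal d) where
  star_comm_self := by
    simp only [Commute, SemiconjBy, star_eq_conjTranspose, diagonal_conjTranspose,
      diagonal_mul_diagonal, mul_comm]

theorem isStarNormal_unitary_conj_diagonal (hU : U ∈ unitaryGroup ι R) (d : ι → R) :
    IsStarNormal (U * diagonal d * star U) :=
  have := isStarNormal_diagonal d
  IsStarNormal.map (Unitary.conjStarAlgAut R _ ⟨U, hU⟩) (diagonal d)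

theorem det_unitary_conj (hU : U ∈ unitaryGroup ι R) (M : Matrix ι ι R) :
    det (U * M * star U) = det M := by
  rw [det_mul, det_mul, mul_right_comm, ← det_mul, mem_unitaryGroup_iff.mp hU, det_one, one_mul]

theorem adjugate_of_mem_unitaryGroup (hU : U ∈ unitaryGroup ι R) :
    adjugate U = det U • star U := by
  calc adjugate U = adjugate U * U * star U := by
        rw [Matrix.mul_assoc, mem_unitaryGroup_iff.mp hU, Matrix.mul_one]
    _ = det U • star U := by rw [adjugate_mul, smul_mul, Matrix.one_mul]

theorem adjugate_unitary_conj (hU : U ∈ unitaryGroup ι R) (M : Matrix ι ι R) :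
    adjugate (U * M * star U) = U * adjugate M * star U := by
  rw [adjugate_mul_distrib, adjugate_mul_distrib, adjugate_of_mem_unitaryGroup hU,
    adjugate_of_mem_unitaryGroup (Unitary.star_mem hU), star_star]
  simp only [Matrix.mul_smul, Matrix.smul_mul, smul_smul]
  rw [← det_mul, mem_unitaryGroup_iff.mp hU, det_one, one_smul, Matrix.mul_assoc]

theorem unitary_conj_sub_smul_one (hU : U ∈ unitaryGroup ι R) (M : Matrix ι ι R) (z : R) :
    U * M * star U - z • 1 = U * (M - z • 1) * star U := by
  rw [Matrix.mul_sub, Matrix.sub_mul, Matrix.mul_smul, Matrix.mul_one, Matrix.smul_mul,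
    mem_unitaryGroup_iff.mp hU]

theorem unitary_conj_diagonal_apply_self (U : Matrix ι ι R) (d : ι → R) (i : ι) :
    (U * diagonal d * star U) i i = ∑ j, U i j * star (U i j) * d j := by
  rw [mul_apply]
  congr! 1 with j
  rw [mul_diagonal, star_apply, mul_right_comm]

end Matrix

theorem IsPrimitiveRoot.sum_div_pow_pow {ζ : ℂ} {n : ℕ} (hζ : IsPrimitiveRoot ζ n) (i k : Fin n) :
    ∑ j : Fin n, (ζ ^ (i : ℕ) / ζ ^ (k : ℕ)) ^ (j : ℕ) = if i = k then (n : ℂ) else 0 := by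
  have hζk : ζ ^ (k : ℕ) ≠ 0 := pow_ne_zero _ (hζ.ne_zero (Fin.pos i).ne')
  rw [Fin.sum_univ_eq_sum_range (fun j => (ζ ^ (i : ℕ) / ζ ^ (k : ℕ)) ^ j)]
  split_ifs with h
  · simp [h, div_self hζk]
  · have hw : ζ ^ (i : ℕ) / ζ ^ (k : ℕ) ≠ 1 := fun hw =>
      h (Fin.ext (hζ.pow_inj i.isLt k.isLt ((div_eq_one_iff_eq hζk).mp hw)))
    have hwn : (ζ ^ (i : ℕ) / ζ ^ (k : ℕ)) ^ n = 1 := by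
      rw [div_pow, ← pow_mul, ← pow_mul, mul_comm (i : ℕ), mul_comm (k : ℕ), pow_mul, pow_mul,
        hζ.pow_eq_one, one_pow, one_pow, div_one]
    rw [geom_sum_eq hw, hwn, sub_self, zero_div]

noncomputable def dftMatrix (n : ℕ) (ζ : ℂ) : Matrix (Fin n) (Fin n) ℂ :=
  of fun j k => ζ ^ ((j : ℕ) * k) / Real.sqrt n

theorem dftMatrix_mul_star_apply {ζ : ℂ} {n : ℕ} (hζ : IsPrimitiveRoot ζ n) (i k j : Fin n) :
    dftMatrix n ζ i j * star (dftMatrix n ζ k j) = (ζ ^ (i : ℕ) / ζ ^ (k : ℕ)) ^ (j : ℕ) / n := by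
  have hstar : star ζ = ζ⁻¹ := (Complex.inv_eq_conj (hζ.norm'_eq_one (Fin.pos i).ne')).symm
  have hsqrt : (Real.sqrt n : ℂ) * Real.sqrt n = n := by
    rw [← Complex.ofReal_mul, Real.mul_self_sqrt n.cast_nonneg, Complex.ofReal_natCast]
  simp only [dftMatrix, of_apply, star_div₀, star_pow, hstar, Complex.star_def,
    Complex.conj_ofReal]
  rw [div_mul_div_comm, hsqrt, div_pow, inv_pow, ← pow_mul, ← pow_mul, div_eq_mul_inv _ (_ ^ _)]

theorem dftMatrix_mem_unitaryGroup {ζ : ℂ} {n : ℕ} (hζ : IsPrimitiveRoot ζ n) :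
    dftMatrix n ζ ∈ unitaryGroup (Fin n) ℂ := by
  refine mem_unitaryGroup_iff.mpr (ext fun i k => ?_)
  simp only [mul_apply, star_apply, dftMatrix_mul_star_apply hζ, ← Finset.sum_div,
    hζ.sum_div_pow_pow, one_apply]
  split_ifs
  · exact div_self (Nat.cast_ne_zero.mpr (Fin.pos i).ne')
  · exact zero_div _

theorem dftMatrix_mul_star_self_apply {ζ : ℂ} {n : ℕ} (hζ : IsPrimitiveRoot ζ n) (i j : Fin n) :
    dftMatrix n ζ i j * star (dftMatrix n ζ i j) = (n : ℂ)⁻¹ := by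
  rw [dftMatrix_mul_star_apply hζ, div_self (pow_ne_zero _ (hζ.ne_zero (Fin.pos i).ne')), one_pow,
    one_div]

theorem skipIdx_eq_succAbove {m : ℕ} (i : Fin (m + 1)) : skipIdx i = i.succAbove := by
  funext j
  simp only [skipIdx, Fin.succAbove, Fin.lt_def, Fin.val_castSucc]
  split_ifs <;> rfl

theorem skipIdx_injective {n : ℕ} (i : Fin n) : Function.Injective (skipIdx i) := by
  intro j k h
  rw [Fin.ext_iff]
  simp only [skipIdx] at h
  split_ifs at h <;> simp only [Fin.ext_iff] at h <;> omega

theorem subDel_sub_smul_one {n : ℕ} (A : Matrix (Fin n) (Fin n) ℂ) (i : Fin n) (z : ℂ) :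
    subDel A i - z • 1 = subDel (A - z • 1) i := by
  ext j k
  simp [subDel, Matrix.sub_apply, one_apply, (skipIdx_injective i).eq_iff]

theorem det_subDel {n : ℕ} (A : Matrix (Fin n) (Fin n) ℂ) (i : Fin n) :
    (subDel A i).det = A.adjugate i i := by
  cases n with
  | zero => exact i.elim0
  | succ m =>
    change (A.submatrix _ _).det = _
    rw [skipIdx_eq_succAbove, adjugate_fin_succ_eq_det_submatrix, ← two_mul, pow_mul, neg_one_sq,
      one_pow, one_mul]

theorem Polynomial.Splits.exists_eq_prod_X_sub_C {R : Type*} [CommRing R] [IsDomain R]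
    {p : R[X]} {n : ℕ} (hsplit : p.Splits) (hp : p.Monic) (hdeg : p.natDegree = n) :
    ∃ μ : Fin n → R, p = ∏ j, (X - C (μ j)) := by
  set l := p.roots.toList
  have hlen : l.length = n := by
    rw [Multiset.length_toList, ← hsplit.natDegree_eq_card_roots, hdeg]
  subst hlen
  refine ⟨fun j => l[(j : ℕ)], ?_⟩
  rw [Fin.prod_univ_fun_getElem l (fun a => X - C a), ← Multiset.prod_coe, ← Multiset.map_coe,
    Multiset.coe_toList]
  exact hsplit.eq_prod_roots_of_monic hp

theorem Polynomial.neg_one_pow_mul_eval_prod_X_sub_C {R ι : Type*} [CommRing R] (s : Finset ι)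
    (μ : ι → R) (z : R) :
    (-1) ^ s.card * (∏ j ∈ s, (X - C (μ j))).eval z = ∏ j ∈ s, (μ j - z) := by
  simp only [eval_prod, eval_sub, eval_X, eval_C, ← Finset.prod_neg, neg_sub]

theorem Polynomial.neg_one_pow_mul_eval_derivative_prod_X_sub_C {R ι : Type*} [CommRing R]
    [DecidableEq ι] (s : Finset ι) (μ : ι → R) (z : R) :
    (-1) ^ (s.card - 1) * (derivative (∏ j ∈ s, (X - C (μ j)))).eval z
      = ∑ j ∈ s, ∏ k ∈ s.erase j, (μ k - z) := by
  simp only [derivative_prod_finset, derivative_X_sub_C, mul_one, eval_finsetSum, Finset.mul_sum]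
  refine Finset.sum_congr rfl fun j hj => ?_
  rw [← Finset.card_erase_of_mem hj, neg_one_pow_mul_eval_prod_X_sub_C]

/-- Every monic complex polynomial `p` of degree `n ≥ 2` is realized (up to `(-1)^n`) as the
characteristic polynomial of a normal `n × n` matrix `A` each of whose degeneracy one
principal submatrices has characteristic polynomial `((-1)^{n-1}/n)·p'`. -/
theorem exists_normal_matrix_differentiator (n : ℕ) (hn : 2 ≤ n)
    (p : Polynomial ℂ) (hmonic : p.Monic) (hdeg : p.natDegree = n) :
    ∃ A : Matrix (Fin n) (Fin n) ℂ,
      A * A.conjTranspose = A.conjTranspose * A ∧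
      (∀ z : ℂ, (A - z • (1 : Matrix (Fin n) (Fin n) ℂ)).det = (-1) ^ n * p.eval z) ∧
      ∀ i : Fin n, ∀ z : ℂ,
        ((subDel A i) - z • (1 : Matrix (Fin (n - 1)) (Fin (n - 1)) ℂ)).det
          = ((-1) ^ (n - 1) / (n : ℂ)) * (Polynomial.derivative p).eval z := by
  obtain ⟨μ, rfl⟩ := (IsAlgClosed.splits p).exists_eq_prod_X_sub_C hmonic hdeg
  obtain ⟨ζ, hζ⟩ : ∃ ζ : ℂ, IsPrimitiveRoot ζ n := ⟨_, Complex.isPrimitiveRoot_exp n (by omega)⟩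
  have hU := dftMatrix_mem_unitaryGroup hζ
  refine ⟨dftMatrix n ζ * diagonal μ * star (dftMatrix n ζ),
    (isStarNormal_unitary_conj_diagonal hU μ).star_comm_self.eq.symm, fun z => ?_, fun i z => ?_⟩
  · rw [unitary_conj_sub_smul_one hU, det_unitary_conj hU, smul_one_eq_diagonal, diagonal_sub,
      det_diagonal, ← neg_one_pow_mul_eval_prod_X_sub_C, Finset.card_univ, Fintype.card_fin]
  · rw [subDel_sub_smul_one, det_subDel, unitary_conj_sub_smul_one hU, adjugate_unitary_conj hU,
      smul_one_eq_diagonal, diagonal_sub, adjugate_diagonal, unitary_conj_diagonal_apply_self]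
    simp only [dftMatrix_mul_star_self_apply hζ, ← Finset.mul_sum]
    rw [← neg_one_pow_mul_eval_derivative_prod_X_sub_C, Finset.card_univ, Fintype.card_fin]
    ring
end
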